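/- arXiv:2506.15997 — 6 statements merged into one kernel-verified Lean document; each statement's English description precedes it below -/
import Mathlib

section
/- For every integer γ ≥ 1 there exists a connected bridgeless graph G with domination number γ(G) = γ whose oriented strong diameter equals 7γ − 1; hence the bound 7γ − 1 on the oriented strong diameter in terms of the domination number is sharp. -/
open SimpleGraph

variable {V : Type*}

/-- A graph is bridgeless if no edge is a bridge. -/
def IsBridgeless (G : SimpleGraph V) : Prop := ∀ e : Sym2 V, ¬ G.IsBridge e

/-- `R` is an orientation of `G`: every arc of `R` is an edge of `G`, every edge of `G`
receives exactly one direction. -/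
def IsOrientation (G : SimpleGraph V) (R : V → V → Prop) : Prop :=
  (∀ u v, R u v → G.Adj u v) ∧ (∀ u v, G.Adj u v → (R u v ∨ R v u)) ∧
  (∀ u v, R u v → ¬ R v u)

/-- There is a directed walk of length `n` from `u` to `v` along the relation `R`. -/
def HasDirWalk (R : V → V → Prop) (u v : V) (n : ℕ) : Prop :=
  ∃ f : Fin (n + 1) → V, f 0 = u ∧ f (Fin.last n) = v ∧
    ∀ i : Fin n, R (f i.castSucc) (f i.succ)

/-- `R` is strongly connected. -/
def IsStrong (R : V → V → Prop) : Prop := ∀ u v : V, ∃ n, HasDirWalk R u v n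

/-- `R` is strongly connected within the vertex set `W`. -/
def IsStrongOn (R : V → V → Prop) (W : Set V) : Prop :=
  ∀ u ∈ W, ∀ v ∈ W, ∃ n, HasDirWalk R u v n

/-- Directed distance `∂(u,v)`: length of a shortest directed path from `u` to `v`. -/
noncomputable def ddist (R : V → V → Prop) (u v : V) : ℕ := sInf {n | HasDirWalk R u v n}

/-- `θ(u,v) = max{∂(u,v), ∂(v,u)}`. -/
noncomputable def theta (R : V → V → Prop) (u v : V) : ℕ := max (ddist R u v) (ddist R v u)

/-- The diameter of a (strong) orientation. -/
noncomputable def diamOr [Fintype V] (R : V → V → Prop) : ℕ :=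
  Finset.univ.sup fun p : V × V => theta R p.1 p.2

/-- The oriented diameter of `G`. -/
noncomputable def orientedDiam [Fintype V] (G : SimpleGraph V) : ℕ :=
  sInf {d | ∃ R : V → V → Prop, IsOrientation G R ∧ IsStrong R ∧ diamOr R = d}

/-- `A` is the arc set of a strongly connected subdigraph of `R` containing `u` and `v`. -/
def IsStrongSubOn (R : V → V → Prop) (u v : V) (A : Set (V × V)) : Prop :=
  (∀ p ∈ A, R p.1 p.2) ∧
  (∀ x ∈ insert u (insert v (Prod.fst '' A ∪ Prod.snd '' A)),
   ∀ y ∈ insert u (insert v (Prod.fst '' A ∪ Prod.snd '' A)),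
     Relation.ReflTransGen (fun a b => (a, b) ∈ A) x y)

/-- Strong distance `sd(u,v)`: minimum number of arcs of a strong subdigraph containing
`u` and `v`. -/
noncomputable def sdist (R : V → V → Prop) (u v : V) : ℕ :=
  sInf {n | ∃ A : Set (V × V), A.Finite ∧ A.ncard = n ∧ IsStrongSubOn R u v A}

/-- The strong diameter of a (strong) orientation. -/
noncomputable def sdiamOr [Fintype V] (R : V → V → Prop) : ℕ :=
  Finset.univ.sup fun p : V × V => sdist R p.1 p.2

/-- The oriented strong diameter of `G`. -/
noncomputable def orientedSDiam [Fintype V] (G : SimpleGraph V) : ℕ :=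
  sInf {d | ∃ R : V → V → Prop, IsOrientation G R ∧ IsStrong R ∧ sdiamOr R = d}

/-- `D` is a dominating set of `G`. -/
def IsDominating (G : SimpleGraph V) (D : Set V) : Prop :=
  ∀ v ∉ D, ∃ u ∈ D, G.Adj u v

/-- The domination number of `G`. -/
noncomputable def dominationNumber [Fintype V] (G : SimpleGraph V) : ℕ :=
  sInf {n | ∃ D : Set V, D.ncard = n ∧ IsDominating G D}

/-- `v` is associated with an isolated triangle. -/
def HasIsolatedTriangle (G : SimpleGraph V) (v : V) : Prop :=
  ∃ v₁ v₂ : V, G.Adj v v₁ ∧ G.Adj v₁ v₂ ∧ G.Adj v₂ v ∧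
    (G.neighborSet v₁).ncard = 2 ∧ (G.neighborSet v₂).ncard = 2

/-- `(G, D)` is a standard pair. -/
def IsStandardPair (G : SimpleGraph V) (D : Set V) : Prop :=
  IsBridgeless G ∧
  (∀ u ∈ D, ∀ v ∈ D, ¬ G.Adj u v) ∧
  (∀ v ∉ D, ∃! u, u ∈ D ∧ G.Adj u v) ∧
  (∀ v ∈ D, HasIsolatedTriangle G v)

/-- `H` is an alternative subgraph of `G` with respect to the dominating set `D`. -/
def IsAlternative (G : SimpleGraph V) (D : Set V) (H : G.Subgraph) : Prop :=
  IsBridgeless H.coe ∧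
  (H.verts ∩ D).Nonempty ∧
  (∀ x ∈ H.verts ∩ D, ∃ a b : V, a ≠ b ∧ a ∉ D ∧ b ∉ D ∧ H.Adj x a ∧ H.Adj x b ∧
    ∀ c, c ∉ D → H.Adj x c → c = a ∨ c = b) ∧
  (∀ y ∈ H.verts, y ∉ D → ∃ x ∈ H.verts ∩ D, H.Adj x y)

/-- `d_i(H⃗)`: maximum of `θ(u,v)` over pairs `u, v ∈ W` with `|{u,v} ∩ D| = i`. -/
noncomputable def dPairs (R : V → V → Prop) (W D : Set V) (i : ℕ) : ℕ :=
  sSup {k | ∃ u ∈ W, ∃ v ∈ W, ({u, v} ∩ D).ncard = i ∧ theta R u v = k}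

/-- `m(H⃗) = max{d₀ − 2, d₁ − 1, d₂}`. -/
noncomputable def mOf (R : V → V → Prop) (W D : Set V) : ℕ :=
  max (dPairs R W D 0 - 2) (max (dPairs R W D 1 - 1) (dPairs R W D 2))

/-- The graph obtained from `G` by subdividing the edge `uv` with a new vertex `none`. -/
def subdivide (G : SimpleGraph V) (u v : V) : SimpleGraph (Option V) :=
  SimpleGraph.fromRel fun a b =>
    match a, b with
    | some x, some y => G.Adj x y ∧ ¬(x = u ∧ y = v) ∧ ¬(x = v ∧ y = u)
    | some x, none => x = u ∨ x = v
    | none, _ => False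

/-- The graph obtained from `G` by attaching a pendant triangle at `v`. -/
def pendantTriangle (G : SimpleGraph V) (v : V) : SimpleGraph (V ⊕ Fin 2) :=
  SimpleGraph.fromRel fun a b =>
    match a, b with
    | Sum.inl x, Sum.inl y => G.Adj x y
    | Sum.inl x, Sum.inr _ => x = v
    | Sum.inr _, Sum.inl _ => False
    | Sum.inr i, Sum.inr j => i ≠ j

/-- `G` has a Hamiltonian path with endpoints `u` and `v`. -/
def HasHamiltonianPathBetween (G : SimpleGraph V) (u v : V) : Prop :=
  ∃ p : G.Walk u v, p.IsPath ∧ ∀ w : V, w ∈ p.support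

/-! The extremal graph is a chain of `m + 1` hubs in which consecutive hubs are joined by a link
(a 4-cycle `v x w y` followed by a triangle `w z v'`), every hub carries a pendant triangle and
hub `0` carries a second one. Each pendant triangle needs its own dominating vertex, so the hubs
form a minimum dominating set and `γ = m + 1`. Orienting every cycle cyclically gives a strong
orientation in which any two vertices lie in the strong subdigraph made of the `7m` link arcs and
the two pendant triangles containing them, so `sdiam ≤ 7m + 6`. Conversely, in any strong
orientation, a strong subdigraph containing a tip of the second triangle at hub `0` and a tip of
the triangle at hub `m` must contain both triangles, and it must cross every link in both
directions through its degree-two vertices, which forces all seven link edges: at least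
`7m + 6 = 7γ - 1` arcs. -/

open Relation

section Walks

variable {R : V → V → Prop} {u w : V} {n : ℕ}

lemma hasDirWalk_zero_iff : HasDirWalk R u w 0 ↔ u = w :=
  ⟨fun ⟨_, h0, hl, _⟩ => h0.symm.trans hl, fun h => ⟨fun _ => u, rfl, h, fun i => i.elim0⟩⟩

lemma hasDirWalk_succ_iff : HasDirWalk R u w (n + 1) ↔ ∃ v, R u v ∧ HasDirWalk R v w n := by
  constructor
  · rintro ⟨f, h0, hl, hs⟩
    refine ⟨f 1, h0 ▸ hs 0, fun i => f i.succ, rfl, by simp only [Fin.succ_last, hl], fun i => ?_⟩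
    simpa only [Fin.succ_castSucc] using hs i.succ
  · rintro ⟨v, huv, f, h0, hl, hs⟩
    refine ⟨Fin.cons u f, rfl, by rw [← Fin.succ_last, Fin.cons_succ, hl], fun i => ?_⟩
    cases i using Fin.cases with
    | zero => simpa [h0] using huv
    | succ i => simpa [← Fin.succ_castSucc] using hs i

lemma reflTransGen_iff_exists_hasDirWalk : ReflTransGen R u w ↔ ∃ n, HasDirWalk R u w n := by
  constructor
  · intro h
    induction h using ReflTransGen.head_induction_on with
    | refl => exact ⟨0, hasDirWalk_zero_iff.2 rfl⟩
    | head huv _ ih =>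
      obtain ⟨n, hn⟩ := ih
      exact ⟨n + 1, hasDirWalk_succ_iff.2 ⟨_, huv, hn⟩⟩
  · rintro ⟨n, hn⟩
    induction n generalizing u with
    | zero => exact hasDirWalk_zero_iff.1 hn ▸ .refl
    | succ n ih =>
      obtain ⟨v, huv, hv⟩ := hasDirWalk_succ_iff.1 hn
      exact .head huv (ih hv)

end Walks

lemma Relation.ReflTransGen.exists_rel_not {α : Type*} {r : α → α → Prop} {P : α → Prop} {a b : α}
    (h : ReflTransGen r a b) (ha : P a) (hb : ¬ P b) : ∃ x y, r x y ∧ P x ∧ ¬ P y := by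
  induction h with
  | refl => exact absurd ha hb
  | @tail c d _ hcd ih =>
    by_cases hc : P c
    · exact ⟨c, d, hcd, hc, hb⟩
    · exact ih hc

lemma reflTransGen_onFun_val {n : ℕ} {T : ℕ → ℕ → Prop} (hT : ∀ a b, T a b → a < n ∧ b < n)
    {x y : Fin n} (h : ReflTransGen T x y) : ReflTransGen (fun a b : Fin n => T a b) x y := by
  suffices ∀ c, ReflTransGen T x c → ∀ hc : c < n, ReflTransGen (fun a b : Fin n => T a b) x ⟨c, hc⟩
    from this _ h y.isLt
  intro c hc
  induction hc with
  | refl => exact fun _ => .refl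
  | @tail b c _ hbc ih => exact fun _ => (ih (hT b c hbc).1).tail hbc

section Orientation

variable {G : SimpleGraph V} {R : V → V → Prop}

lemma IsOrientation.reachable (hR : IsOrientation G R) {u w : V} (h : ReflTransGen R u w) :
    G.Reachable u w := by
  induction h with
  | refl => rfl
  | tail _ hbc ih => exact ih.trans (hR.1 _ _ hbc).reachable

lemma IsOrientation.connected [Nonempty V] (hR : IsOrientation G R) (hs : IsStrong R) :
    G.Connected :=
  (connected_iff G).2 ⟨fun u w => hR.reachable (reflTransGen_iff_exists_hasDirWalk.2 (hs u w)),
    inferInstance⟩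

/-- A walk into `a` can stop at its first visit to `a`, so it needs the edge `ab` only as the
arc `b → a`. -/
lemma IsOrientation.reachable_deleteEdges (hR : IsOrientation G R) {a b x : V} (hba : ¬ R b a)
    (h : ReflTransGen R x a) : (G.deleteEdges {s(a, b)}).Reachable x a := by
  induction h using ReflTransGen.head_induction_on with
  | refl => rfl
  | @head x c hxc _ ih =>
    by_cases he : s(x, c) = s(a, b)
    · rcases Sym2.eq_iff.1 he with ⟨rfl, -⟩ | ⟨rfl, rfl⟩
      · rfl
      · exact (hba hxc).elim
    · exact (deleteEdges_adj.2 ⟨hR.1 _ _ hxc, he⟩).reachable.trans ih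

lemma IsOrientation.isBridgeless (hR : IsOrientation G R) (hs : IsStrong R) : IsBridgeless G := by
  have reach x y : ReflTransGen R x y := reflTransGen_iff_exists_hasDirWalk.2 (hs x y)
  intro e
  induction e using Sym2.ind with | h a b => ?_
  rw [isBridge_iff, not_not]
  by_cases hba : R b a
  · simpa only [Sym2.eq_swap] using hR.reachable_deleteEdges (hR.2.2 _ _ hba) (reach a b)
  · exact (hR.reachable_deleteEdges hba (reach b a)).symm

end Orientation

section StrongSubdigraph

def arcVerts (u v : V) (A : Set (V × V)) : Set V :=
  insert u (insert v (Prod.fst '' A ∪ Prod.snd '' A))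

variable {u v a b : V} {A : Set (V × V)}

lemma left_mem_arcVerts : u ∈ arcVerts u v A := Set.mem_insert _ _

lemma right_mem_arcVerts : v ∈ arcVerts u v A := Set.mem_insert_of_mem _ (Set.mem_insert _ _)

lemma fst_mem_arcVerts (h : (a, b) ∈ A) : a ∈ arcVerts u v A :=
  Set.mem_insert_of_mem _ (Set.mem_insert_of_mem _ (Or.inl ⟨_, h, rfl⟩))

lemma snd_mem_arcVerts (h : (a, b) ∈ A) : b ∈ arcVerts u v A :=
  Set.mem_insert_of_mem _ (Set.mem_insert_of_mem _ (Or.inr ⟨_, h, rfl⟩))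

lemma image_arcVerts {W : Type*} (f : V → W) :
    f '' arcVerts u v A = arcVerts (f u) (f v) (Prod.map f f '' A) := by
  simp only [arcVerts, Set.image_insert_eq, Set.image_union, Set.image_image, Prod.map_fst,
    Prod.map_snd]

def edgesOf (A : Set (V × V)) : Set (Sym2 V) := (fun p => s(p.1, p.2)) '' A

lemma mk_mem_edgesOf (h : (a, b) ∈ A) : s(a, b) ∈ edgesOf A := ⟨_, h, rfl⟩

lemma mk_mem_edgesOf_of_swap (h : (b, a) ∈ A) : s(a, b) ∈ edgesOf A := ⟨_, h, Sym2.eq_swap⟩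

structure IsStrongSubdigraph (G : SimpleGraph V) (u v : V) (A : Set (V × V)) : Prop where
  adj : ∀ a b, (a, b) ∈ A → G.Adj a b
  asymm : ∀ a b, (a, b) ∈ A → (b, a) ∉ A
  ne : u ≠ v
  reach : ∀ x ∈ arcVerts u v A, ∀ y ∈ arcVerts u v A, ReflTransGen (fun a b => (a, b) ∈ A) x y

variable {G : SimpleGraph V}

lemma IsStrongSubOn.isStrongSubdigraph {R : V → V → Prop} (hR : IsOrientation G R)
    (hA : IsStrongSubOn R u v A) (huv : u ≠ v) : IsStrongSubdigraph G u v A :=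
  ⟨fun _ _ h => hR.1 _ _ (hA.1 _ h), fun _ _ h h' => hR.2.2 _ _ (hA.1 _ h) (hA.1 _ h'), huv, hA.2⟩

namespace IsStrongSubdigraph

variable {x y : V}

lemma map {W : Type*} {G' : SimpleGraph W} (hA : IsStrongSubdigraph G u v A) {f : V → W}
    (hf : Function.Injective f) (hG : ∀ a b, G.Adj a b → G'.Adj (f a) (f b)) :
    IsStrongSubdigraph G' (f u) (f v) (Prod.map f f '' A) where
  adj := by
    rintro _ _ ⟨⟨a, b⟩, h, ⟨⟩⟩
    exact hG a b (hA.adj a b h)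
  asymm := by
    rintro _ _ ⟨⟨a, b⟩, h, he⟩ ⟨⟨c, d⟩, h', he'⟩
    simp only [Prod.map, Prod.mk.injEq] at he he'
    obtain ⟨rfl, rfl⟩ : c = b ∧ d = a := ⟨hf (he'.1.trans he.2.symm), hf (he'.2.trans he.1.symm)⟩
    exact hA.asymm _ _ h h'
  ne := hf.ne hA.ne
  reach := by
    rw [← image_arcVerts]
    rintro _ ⟨x, hx, rfl⟩ _ ⟨y, hy, rfl⟩
    exact ReflTransGen.lift f (fun a b h => ⟨(a, b), h, rfl⟩) _ _ (hA.reach x hx y hy)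

lemma exists_arc_from (hA : IsStrongSubdigraph G u v A) (hx : x ∈ arcVerts u v A) :
    ∃ y, (x, y) ∈ A := by
  obtain ⟨t, ht, hxt⟩ : ∃ t ∈ arcVerts u v A, x ≠ t := by
    by_cases hxu : x = u
    · exact ⟨v, right_mem_arcVerts, hxu ▸ hA.ne⟩
    · exact ⟨u, left_mem_arcVerts, hxu⟩
  obtain rfl | ⟨y, hxy, -⟩ := (hA.reach x hx t ht).cases_head
  exacts [(hxt rfl).elim, ⟨y, hxy⟩]

lemma exists_arc_to (hA : IsStrongSubdigraph G u v A) (hx : x ∈ arcVerts u v A) :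
    ∃ y, (y, x) ∈ A := by
  obtain ⟨t, ht, hxt⟩ : ∃ t ∈ arcVerts u v A, x ≠ t := by
    by_cases hxu : x = u
    · exact ⟨v, right_mem_arcVerts, hxu ▸ hA.ne⟩
    · exact ⟨u, left_mem_arcVerts, hxu⟩
  obtain rfl | ⟨y, -, hyx⟩ := (hA.reach t ht x hx).cases_tail
  exacts [(hxt rfl).elim, ⟨y, hyx⟩]

lemma arc_from_of_arc_to (hA : IsStrongSubdigraph G u v A) (hx : ∀ c, G.Adj x c → c = a ∨ c = b)
    (h : (a, x) ∈ A) : (x, b) ∈ A := by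
  obtain ⟨c, hc⟩ := hA.exists_arc_from (snd_mem_arcVerts h)
  obtain rfl | rfl := hx c (hA.adj _ _ hc)
  exacts [(hA.asymm _ _ h hc).elim, hc]

lemma arc_to_of_arc_from (hA : IsStrongSubdigraph G u v A) (hx : ∀ c, G.Adj x c → c = a ∨ c = b)
    (h : (x, a) ∈ A) : (b, x) ∈ A := by
  obtain ⟨c, hc⟩ := hA.exists_arc_to (fst_mem_arcVerts h)
  obtain rfl | rfl := hx c (hA.adj _ _ hc).symm
  exacts [(hA.asymm _ _ h hc).elim, hc]

lemma pendant_triangle (hA : IsStrongSubdigraph G u v A) {z : V} (hy : y ∈ arcVerts u v A)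
    (hyn : ∀ c, G.Adj y c → c = x ∨ c = z) (hzn : ∀ c, G.Adj z c → c = x ∨ c = y) :
    s(x, y) ∈ edgesOf A ∧ s(y, z) ∈ edgesOf A ∧ s(z, x) ∈ edgesOf A := by
  obtain ⟨c, hc⟩ := hA.exists_arc_from hy
  obtain rfl | rfl := hyn c (hA.adj _ _ hc)
  · have hzy := hA.arc_to_of_arc_from hyn hc
    have hxz := hA.arc_to_of_arc_from (fun c h => (hzn c h).symm) hzy
    exact ⟨mk_mem_edgesOf_of_swap hc, mk_mem_edgesOf_of_swap hzy,
      mk_mem_edgesOf_of_swap hxz⟩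
  · have hzx := hA.arc_from_of_arc_to (fun c h => (hzn c h).symm) hc
    have hxy := hA.arc_to_of_arc_from (fun c h => (hyn c h).symm) hc
    exact ⟨mk_mem_edgesOf hxy, mk_mem_edgesOf hc, mk_mem_edgesOf hzx⟩

lemma square_of_crossing (hA : IsStrongSubdigraph G u v A) (hx : ∀ c, G.Adj x c → c = a ∨ c = b)
    (hy : ∀ c, G.Adj y c → c = a ∨ c = b) (hin : (x, b) ∈ A ∨ (y, b) ∈ A)
    (hout : (b, x) ∈ A ∨ (b, y) ∈ A) :
    s(a, x) ∈ edgesOf A ∧ s(x, b) ∈ edgesOf A ∧ s(b, y) ∈ edgesOf A ∧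
      s(y, a) ∈ edgesOf A := by
  have hx' c (h : G.Adj x c) := (hx c h).symm
  have hy' c (h : G.Adj y c) := (hy c h).symm
  rcases hin with hxb | hyb
  · have hby := hout.resolve_left (hA.asymm _ _ hxb)
    exact ⟨mk_mem_edgesOf (hA.arc_to_of_arc_from hx' hxb), mk_mem_edgesOf hxb,
      mk_mem_edgesOf hby, mk_mem_edgesOf (hA.arc_from_of_arc_to hy' hby)⟩
  · have hbx := hout.resolve_right (hA.asymm _ _ hyb)
    exact ⟨mk_mem_edgesOf_of_swap (hA.arc_from_of_arc_to hx' hbx),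
      mk_mem_edgesOf_of_swap hbx, mk_mem_edgesOf_of_swap hyb,
      mk_mem_edgesOf_of_swap (hA.arc_to_of_arc_from hy' hyb)⟩

lemma triangle_of_crossing (hA : IsStrongSubdigraph G u v A) {z : V}
    (hz : ∀ c, G.Adj z c → c = a ∨ c = b) (hin : (a, b) ∈ A ∨ (z, b) ∈ A)
    (hout : (b, a) ∈ A ∨ (b, z) ∈ A) :
    s(a, z) ∈ edgesOf A ∧ s(z, b) ∈ edgesOf A ∧ s(b, a) ∈ edgesOf A := by
  have hz' c (h : G.Adj z c) := (hz c h).symm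
  rcases hin with hab | hzb
  · have hbz := hout.resolve_left (hA.asymm _ _ hab)
    exact ⟨mk_mem_edgesOf_of_swap (hA.arc_from_of_arc_to hz' hbz),
      mk_mem_edgesOf_of_swap hbz, mk_mem_edgesOf_of_swap hab⟩
  · have hba := hout.resolve_right (hA.asymm _ _ hzb)
    exact ⟨mk_mem_edgesOf (hA.arc_to_of_arc_from hz' hzb), mk_mem_edgesOf hzb,
      mk_mem_edgesOf hba⟩

end IsStrongSubdigraph

end StrongSubdigraph

lemma sdist_le_ncard {R : V → V → Prop} {u v : V} {A : Set (V × V)} (hA : IsStrongSubOn R u v A)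
    (hfin : A.Finite) : sdist R u v ≤ A.ncard :=
  Nat.sInf_le ⟨A, hfin, rfl, hA⟩

lemma le_sdist [Finite V] {R : V → V → Prop} (hs : IsStrong R) {u v : V} {n : ℕ}
    (h : ∀ A, IsStrongSubOn R u v A → n ≤ A.ncard) : n ≤ sdist R u v := by
  have hall : IsStrongSubOn R u v {p | R p.1 p.2} :=
    ⟨fun _ hp => hp, fun x _ y _ => reflTransGen_iff_exists_hasDirWalk.2 (hs x y)⟩
  refine le_csInf ⟨_, _, Set.toFinite _, rfl, hall⟩ ?_
  rintro _ ⟨A, -, rfl, hA⟩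
  exact h A hA

lemma orientedSDiam_eq [Fintype V] {G : SimpleGraph V} {R : V → V → Prop} {d : ℕ}
    (hR : IsOrientation G R) (hs : IsStrong R) (hle : ∀ x y, sdist R x y ≤ d)
    (hge : ∀ R', IsOrientation G R' → IsStrong R' → ∃ x y, d ≤ sdist R' x y) :
    orientedSDiam G = d := by
  have hsup {R' : V → V → Prop} (x y : V) : sdist R' x y ≤ sdiamOr R' :=
    Finset.le_sup (f := fun p : V × V => sdist R' p.1 p.2) (Finset.mem_univ (x, y))
  have hR' : sdiamOr R ∈ {d | ∃ R', IsOrientation G R' ∧ IsStrong R' ∧ sdiamOr R' = d} :=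
    ⟨R, hR, hs, rfl⟩
  refine le_antisymm ?_ (le_csInf ⟨_, hR'⟩ ?_)
  · exact (Nat.sInf_le hR').trans (Finset.sup_le fun p _ => hle p.1 p.2)
  · rintro _ ⟨R', hR', hs', rfl⟩
    obtain ⟨x, y, hxy⟩ := hge R' hR' hs'
    exact hxy.trans (hsup x y)

lemma IsDominating.image_subset_image {G : SimpleGraph V} {D : Set V} (hD : IsDominating G D)
    {ι : Type*} (κ : V → ι) {S : Set V} (hS : ∀ s ∈ S, ∀ w, G.Adj w s → κ w = κ s) :
    κ '' S ⊆ κ '' D := by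
  rintro _ ⟨s, hs, rfl⟩
  by_cases hsD : s ∈ D
  · exact ⟨s, hsD, rfl⟩
  · obtain ⟨w, hw, hws⟩ := hD s hsD
    exact ⟨w, hw, hS s hs w hws⟩

lemma dominationNumber_eq [Fintype V] {G : SimpleGraph V} {D : Set V} {n : ℕ}
    (hD : IsDominating G D) (hn : D.ncard = n) (hle : ∀ D', IsDominating G D' → n ≤ D'.ncard) :
    dominationNumber G = n :=
  le_antisymm (Nat.sInf_le ⟨D, hn, hD⟩)
    (le_csInf ⟨n, D, hn, hD⟩ fun _ ⟨D', h, hD'⟩ => h ▸ hle D' hD')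


namespace SharpExample

/-! Vertex `7q` (`q ≤ m`) is a hub carrying a pendant triangle with tips `7q+1, 7q+2`. For
`j < m` the hubs `v = 7j` and `v' = 7j+7` are joined by the link `x = 7j+3`, `y = 7j+4`,
`w = 7j+5`, `z = 7j+6`, consisting of the 4-cycle `v x w y` and the triangle `w z v'`; the tips
`7m+3, 7m+4` span a second pendant triangle at hub `0`. The arcs below orient every 4-cycle and
triangle cyclically. -/

def linkArc (m a b : ℕ) : Prop :=
  a ≤ 7 * m ∧ b ≤ 7 * m ∧
    (a % 7 = 0 ∧ b = a + 3 ∨ a % 7 = 3 ∧ b = a + 2 ∨ a % 7 = 5 ∧ a = b + 1 ∨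
      a % 7 = 4 ∧ a = b + 4 ∨ a % 7 = 5 ∧ b = a + 1 ∨ a % 7 = 6 ∧ b = a + 1 ∨ a % 7 = 0 ∧ a = b + 2)

def pendantArc (m a b : ℕ) : Prop :=
  a ≤ 7 * m + 2 ∧ b ≤ 7 * m + 2 ∧
      (a % 7 = 0 ∧ b = a + 1 ∨ a % 7 = 1 ∧ b = a + 1 ∨ a % 7 = 2 ∧ a = b + 2) ∨
    a = 0 ∧ b = 7 * m + 3 ∨ a = 7 * m + 3 ∧ b = 7 * m + 4 ∨ a = 7 * m + 4 ∧ b = 0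

def arc (m a b : ℕ) : Prop := linkArc m a b ∨ pendantArc m a b

def natGraph (m : ℕ) : SimpleGraph ℕ := fromRel (arc m)

def graph (m : ℕ) : SimpleGraph (Fin (7 * m + 5)) := (natGraph m).comap Fin.val

def orientation (m : ℕ) (a b : Fin (7 * m + 5)) : Prop := arc m a b

variable {m a b k q q' : ℕ}

lemma arc_lt (h : arc m a b) : a < 7 * m + 5 ∧ b < 7 * m + 5 := by
  unfold arc linkArc pendantArc at h; omega

lemma not_arc_swap (h : arc m a b) : ¬ arc m b a := by
  unfold arc linkArc pendantArc at *; omega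

lemma natGraph_adj : (natGraph m).Adj a b ↔ arc m a b ∨ arc m b a := by
  refine (fromRel_adj _ _ _).trans ⟨fun h => h.2, fun h => ⟨?_, h⟩⟩
  unfold arc linkArc pendantArc at h; omega

lemma natGraph_adj_eq_or_eq {k x y : ℕ} (h : ∀ c, arc m k c ∨ arc m c k → c = x ∨ c = y) (c : ℕ)
    (hc : (natGraph m).Adj k c) : c = x ∨ c = y :=
  h c (natGraph_adj.1 hc)

lemma isOrientation (m : ℕ) : IsOrientation (graph m) (orientation m) :=
  ⟨fun _ _ h => natGraph_adj.2 (Or.inl h), fun _ _ h => natGraph_adj.1 h,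
    fun _ _ h => not_arc_swap h⟩

/-- Hubs and link vertices, i.e. all vertices except the tips of the pendant triangles. -/
def OnSpine (m k : ℕ) : Prop := k % 7 = 0 ∧ k ≤ 7 * m ∨ 3 ≤ k % 7 ∧ k < 7 * m

def LinkedToZero (T : ℕ → ℕ → Prop) (k : ℕ) : Prop := ReflTransGen T k 0 ∧ ReflTransGen T 0 k

variable {T : ℕ → ℕ → Prop}

lemma linkedToZero_hub (hL : ∀ a b, linkArc m a b → T a b) (hq : q ≤ m) :
    LinkedToZero T (7 * q) := by
  have step a b (h : linkArc m a b) : ReflTransGen T a b := .single (hL a b h)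
  induction q with
  | zero => exact ⟨.refl, .refl⟩
  | succ j ih =>
    obtain ⟨ih₁, ih₂⟩ := ih (by omega)
    constructor
    · refine .trans ?_ ih₁
      refine (step _ (7 * j + 5) ?_).trans ((step _ (7 * j + 4) ?_).trans (step _ _ ?_)) <;>
        unfold linkArc <;> omega
    · refine ih₂.trans ?_
      refine (step _ (7 * j + 3) ?_).trans ((step _ (7 * j + 5) ?_).trans
        ((step _ (7 * j + 6) ?_).trans (step _ _ ?_))) <;> unfold linkArc <;> omega

lemma linkedToZero_of_onSpine (hL : ∀ a b, linkArc m a b → T a b) (hk : OnSpine m k) :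
    LinkedToZero T k := by
  have step a b (h : linkArc m a b) : ReflTransGen T a b := .single (hL a b h)
  obtain ⟨j, r, rfl, hr⟩ : ∃ j r, k = 7 * j + r ∧ r < 7 := ⟨k / 7, k % 7, by omega, by omega⟩
  unfold OnSpine at hk
  obtain ⟨hv₁, hv₂⟩ := linkedToZero_hub hL (q := j) (by omega)
  by_cases hr0 : r = 0
  · subst hr0; exact ⟨hv₁, hv₂⟩
  obtain ⟨hv'₁, -⟩ := linkedToZero_hub hL (q := j + 1) (by omega)
  have vx : ReflTransGen T (7 * j) (7 * j + 3) := step _ _ (by unfold linkArc; omega)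
  have xw : ReflTransGen T (7 * j + 3) (7 * j + 5) := step _ _ (by unfold linkArc; omega)
  have wy : ReflTransGen T (7 * j + 5) (7 * j + 4) := step _ _ (by unfold linkArc; omega)
  have yv : ReflTransGen T (7 * j + 4) (7 * j) := step _ _ (by unfold linkArc; omega)
  have wz : ReflTransGen T (7 * j + 5) (7 * j + 6) := step _ _ (by unfold linkArc; omega)
  have zv' : ReflTransGen T (7 * j + 6) (7 * (j + 1)) := step _ _ (by unfold linkArc; omega)
  obtain rfl | rfl | rfl | rfl : r = 3 ∨ r = 4 ∨ r = 5 ∨ r = 6 := by omega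
  · exact ⟨xw.trans (wy.trans (yv.trans hv₁)), hv₂.trans vx⟩
  · exact ⟨yv.trans hv₁, hv₂.trans (vx.trans (xw.trans wy))⟩
  · exact ⟨wy.trans (yv.trans hv₁), hv₂.trans (vx.trans xw)⟩
  · exact ⟨zv'.trans hv'₁, hv₂.trans (vx.trans (xw.trans wz))⟩

/-- Pendant triangle `q ≤ m` sits at hub `7q`; any `q > m` indexes the second one at hub `0`. -/
def hub (m q : ℕ) : ℕ := if q ≤ m then 7 * q else 0

def tip₁ (m q : ℕ) : ℕ := if q ≤ m then 7 * q + 1 else 7 * m + 3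

def tip₂ (m q : ℕ) : ℕ := if q ≤ m then 7 * q + 2 else 7 * m + 4

def InTri (m q k : ℕ) : Prop := k = hub m q ∨ k = tip₁ m q ∨ k = tip₂ m q

def triIndex (m k : ℕ) : ℕ := if 7 * m + 3 ≤ k then m + 1 else k / 7

lemma arc_hub_tip₁ : arc m (hub m q) (tip₁ m q) := by
  unfold arc pendantArc hub tip₁; split_ifs <;> omega

lemma arc_tip₁_tip₂ : arc m (tip₁ m q) (tip₂ m q) := by
  unfold arc pendantArc tip₁ tip₂; split_ifs <;> omega

lemma arc_tip₂_hub : arc m (tip₂ m q) (hub m q) := by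
  unfold arc pendantArc tip₂ hub; split_ifs <;> omega

lemma onSpine_or_inTri (hk : k < 7 * m + 5) : OnSpine m k ∨ InTri m (triIndex m k) k := by
  unfold OnSpine InTri triIndex hub tip₁ tip₂; split_ifs <;> omega

lemma linkedToZero_of_inTri (hL : ∀ a b, linkArc m a b → T a b) (h₁ : T (hub m q) (tip₁ m q))
    (h₂ : T (tip₁ m q) (tip₂ m q)) (h₃ : T (tip₂ m q) (hub m q)) (hk : InTri m q k) :
    LinkedToZero T k := by
  obtain ⟨hv₁, hv₂⟩ := linkedToZero_of_onSpine hL (k := hub m q)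
    (by unfold OnSpine hub; split_ifs <;> omega)
  rcases hk with rfl | rfl | rfl
  · exact ⟨hv₁, hv₂⟩
  · exact ⟨(ReflTransGen.single h₂).tail h₃ |>.trans hv₁, hv₂.tail h₁⟩
  · exact ⟨(ReflTransGen.single h₃).trans hv₁, (hv₂.tail h₁).tail h₂⟩

lemma linkedToZero_arc (hk : k < 7 * m + 5) : LinkedToZero (arc m) k :=
  have hL a b (h : linkArc m a b) : arc m a b := Or.inl h
  (onSpine_or_inTri hk).elim (linkedToZero_of_onSpine hL)
    (linkedToZero_of_inTri hL arc_hub_tip₁ arc_tip₁_tip₂ arc_tip₂_hub)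

lemma isStrong (m : ℕ) : IsStrong (orientation m) := fun x y =>
  reflTransGen_iff_exists_hasDirWalk.1 <| reflTransGen_onFun_val (fun _ _ h => arc_lt h)
    ((linkedToZero_arc x.isLt).1.trans (linkedToZero_arc y.isLt).2)

lemma connected (m : ℕ) : (graph m).Connected := (isOrientation m).connected (isStrong m)

lemma isBridgeless (m : ℕ) : IsBridgeless (graph m) := (isOrientation m).isBridgeless (isStrong m)

lemma exists_hub_arc (hk : k < 7 * m + 5) (h : k % 7 ≠ 0) :
    ∃ q ≤ m, arc m (7 * q) k ∨ arc m k (7 * q) := by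
  unfold arc
  by_cases hx : 7 * m + 3 ≤ k
  · obtain rfl | rfl : k = 7 * m + 3 ∨ k = 7 * m + 4 := by omega
    exacts [⟨0, by omega, .inl (.inr (by unfold pendantArc; omega))⟩,
      ⟨0, by omega, .inr (.inr (by unfold pendantArc; omega))⟩]
  obtain h | h | h | h | h | h : k % 7 = 1 ∨ k % 7 = 2 ∨ k % 7 = 3 ∨ k % 7 = 4 ∨ k % 7 = 5 ∨
    k % 7 = 6 := by omega
  · exact ⟨k / 7, by omega, .inl (.inr (by unfold pendantArc; omega))⟩
  · exact ⟨k / 7, by omega, .inr (.inr (by unfold pendantArc; omega))⟩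
  · exact ⟨k / 7, by omega, .inl (.inl (by unfold linkArc; omega))⟩
  · exact ⟨k / 7, by omega, .inr (.inl (by unfold linkArc; omega))⟩
  · exact ⟨k / 7 + 1, by omega, .inl (.inl (by unfold linkArc; omega))⟩
  · exact ⟨k / 7 + 1, by omega, .inr (.inl (by unfold linkArc; omega))⟩

lemma dominationNumber_graph (m : ℕ) : dominationNumber (graph m) = m + 1 := by
  refine dominationNumber_eq (D := Set.range fun q : Fin (m + 1) => ⟨7 * q, by omega⟩) ?_ ?_ ?_
  · intro x hx
    obtain ⟨q, hq, hadj⟩ := exists_hub_arc x.isLt fun h0 =>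
      hx ⟨⟨x / 7, by omega⟩, Fin.ext (by simp only; omega)⟩
    exact ⟨_, ⟨⟨q, by omega⟩, rfl⟩, natGraph_adj.2 hadj⟩
  · rw [← Set.image_univ, Set.ncard_image_of_injective _ (fun q q' h => Fin.ext (by simpa using h)),
      Set.ncard_univ, Nat.card_eq_fintype_card, Fintype.card_fin]
  · intro D hD
    have hsub : (↑(Finset.range (m + 1)) : Set ℕ) ⊆
        (fun x : Fin (7 * m + 5) => x.val / 7) '' D := by
      refine subset_trans ?_ (hD.image_subset_image _ (S := {x | x.val % 7 = 1}) ?_)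
      · intro q hq
        simp only [Finset.coe_range, Set.mem_Iio] at hq
        exact ⟨⟨7 * q + 1, by omega⟩, by simp, by simp; omega⟩
      · intro s hs w hw
        have := natGraph_adj.1 hw
        simp only [Set.mem_ofPred_eq] at hs
        unfold arc linkArc pendantArc at this
        omega
    calc m + 1 = (↑(Finset.range (m + 1)) : Set ℕ).ncard := by simp
      _ ≤ _ := Set.ncard_le_ncard hsub (Set.toFinite _)
      _ ≤ D.ncard := Set.ncard_image_le (Set.toFinite _)

def linkEdge (j : ℕ) : Fin 7 → Sym2 ℕ :=
  ![s(7 * j, 7 * j + 3), s(7 * j + 3, 7 * j + 5), s(7 * j + 5, 7 * j + 4), s(7 * j + 4, 7 * j),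
    s(7 * j + 5, 7 * j + 6), s(7 * j + 6, 7 * j + 7), s(7 * j + 7, 7 * j + 5)]

def linkEdges (m : ℕ) : Finset (Sym2 ℕ) :=
  (Finset.range m ×ˢ Finset.univ).image fun p => linkEdge p.1 p.2

def triEdges (m q : ℕ) : Finset (Sym2 ℕ) :=
  {s(hub m q, tip₁ m q), s(tip₁ m q, tip₂ m q), s(tip₂ m q, hub m q)}

def coreEdges (m q q' : ℕ) : Finset (Sym2 ℕ) := linkEdges m ∪ triEdges m q ∪ triEdges m q'

lemma mem_linkEdges {e : Sym2 ℕ} : e ∈ linkEdges m ↔ ∃ j < m, ∃ r, linkEdge j r = e := by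
  simp [linkEdges]

lemma mk_mem_linkEdges (h : linkArc m a b) : s(a, b) ∈ linkEdges m := by
  rcases h with ⟨ha, hb, h | h | h | h | h | h | h⟩ <;>
    refine mem_linkEdges.2 ⟨min a b / 7, by omega, ?_⟩
  exacts [⟨0, by simp [linkEdge]; omega⟩, ⟨1, by simp [linkEdge]; omega⟩,
    ⟨2, by simp [linkEdge]; omega⟩, ⟨3, by simp [linkEdge]; omega⟩,
    ⟨4, by simp [linkEdge]; omega⟩, ⟨5, by simp [linkEdge]; omega⟩,
    ⟨6, by simp [linkEdge]; omega⟩]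

lemma onSpine_of_mem_linkEdges {e : Sym2 ℕ} (he : e ∈ linkEdges m) (hk : k ∈ e) : OnSpine m k := by
  obtain ⟨j, hj, r, rfl⟩ := mem_linkEdges.1 he
  unfold OnSpine
  fin_cases r <;> simp [linkEdge] at hk <;> omega

lemma inTri_of_mem_triEdges {e : Sym2 ℕ} (he : e ∈ triEdges m q) (hk : k ∈ e) : InTri m q k := by
  simp only [triEdges, Finset.mem_insert, Finset.mem_singleton] at he
  rcases he with rfl | rfl | rfl <;> simp only [Sym2.mem_iff] at hk <;> unfold InTri <;> tauto

lemma card_coreEdges_le : (coreEdges m q q').card ≤ 7 * m + 6 := by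
  have hlink : (linkEdges m).card ≤ 7 * m :=
    Finset.card_image_le.trans (by simp [mul_comm])
  have := Finset.card_union_le (linkEdges m ∪ triEdges m q) (triEdges m q')
  have := Finset.card_union_le (linkEdges m) (triEdges m q)
  have : (triEdges m q).card ≤ 3 := Finset.card_le_three
  have : (triEdges m q').card ≤ 3 := Finset.card_le_three
  unfold coreEdges
  omega

lemma card_coreEdges : (coreEdges m m (m + 1)).card = 7 * m + 6 := by
  have hlink : (linkEdges m).card = 7 * m := by
    rw [linkEdges, Finset.card_image_of_injOn, Finset.card_product, Finset.card_range,
      Finset.card_univ, Fintype.card_fin, mul_comm]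
    rintro ⟨j, r⟩ - ⟨j', r'⟩ - h
    fin_cases r <;> fin_cases r' <;> simp [linkEdge] at h ⊢ <;> omega
  have htri (q : ℕ) : (triEdges m q).card = 3 := by
    refine Finset.card_eq_three.2 ⟨_, _, _, ?_, ?_, ?_, rfl⟩ <;>
      simp only [ne_eq, Sym2.eq_iff, hub, tip₁, tip₂] <;> split_ifs <;> simp
  have hdisj (q : ℕ) : Disjoint (linkEdges m) (triEdges m q) := by
    refine Finset.disjoint_right.2 fun e he he' => ?_
    have : tip₁ m q ∈ e ∨ tip₂ m q ∈ e := by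
      simp only [triEdges, Finset.mem_insert, Finset.mem_singleton] at he
      rcases he with rfl | rfl | rfl <;> simp
    have h₁ : ¬ OnSpine m (tip₁ m q) := by unfold OnSpine tip₁; split_ifs <;> omega
    have h₂ : ¬ OnSpine m (tip₂ m q) := by unfold OnSpine tip₂; split_ifs <;> omega
    exact this.elim (h₁ <| onSpine_of_mem_linkEdges he' ·) (h₂ <| onSpine_of_mem_linkEdges he' ·)
  have hdisj' : Disjoint (linkEdges m ∪ triEdges m m) (triEdges m (m + 1)) := by
    refine Finset.disjoint_union_left.2 ⟨hdisj _, ?_⟩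
    simp [Finset.disjoint_left, triEdges, hub, tip₁, tip₂]
  rw [coreEdges, Finset.card_union_of_disjoint hdisj', Finset.card_union_of_disjoint (hdisj _),
    hlink, htri, htri]

def coreArc (m q q' a b : ℕ) : Prop := arc m a b ∧ s(a, b) ∈ coreEdges m q q'

lemma linkedToZero_coreArc (hk : OnSpine m k ∨ InTri m q k ∨ InTri m q' k) :
    LinkedToZero (coreArc m q q') k := by
  have hL a b (h : linkArc m a b) : coreArc m q q' a b :=
    ⟨.inl h, Finset.mem_union_left _ (Finset.mem_union_left _ (mk_mem_linkEdges h))⟩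
  rcases hk with hk | hk | hk
  · exact linkedToZero_of_onSpine hL hk
  all_goals
    exact linkedToZero_of_inTri hL ⟨arc_hub_tip₁, by simp [coreEdges, triEdges]⟩
      ⟨arc_tip₁_tip₂, by simp [coreEdges, triEdges]⟩ ⟨arc_tip₂_hub, by simp [coreEdges, triEdges]⟩
      hk

lemma coreArc_endpoint (h : coreArc m q q' a b) (hk : k = a ∨ k = b) :
    OnSpine m k ∨ InTri m q k ∨ InTri m q' k := by
  have hk' : k ∈ s(a, b) := by rcases hk with rfl | rfl <;> simp
  rcases Finset.mem_union.1 h.2 with h' | h'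
  · rcases Finset.mem_union.1 h' with h'' | h''
    exacts [.inl (onSpine_of_mem_linkEdges h'' hk'), .inr (.inl (inTri_of_mem_triEdges h'' hk'))]
  · exact .inr (.inr (inTri_of_mem_triEdges h' hk'))

lemma sdist_le (u v : Fin (7 * m + 5)) : sdist (orientation m) u v ≤ 7 * m + 6 := by
  set T := coreArc m (triIndex m u) (triIndex m v)
  set A : Set (Fin (7 * m + 5) × Fin (7 * m + 5)) := {p | T p.1 p.2}
  have hlinked : ∀ x ∈ arcVerts u v A, LinkedToZero T x := by
    rintro x (rfl | rfl | ⟨p, hp, rfl⟩ | ⟨p, hp, rfl⟩)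
    · exact linkedToZero_coreArc ((onSpine_or_inTri x.isLt).imp_right .inl)
    · exact linkedToZero_coreArc ((onSpine_or_inTri x.isLt).imp_right .inr)
    · exact linkedToZero_coreArc (coreArc_endpoint hp (.inl rfl))
    · exact linkedToZero_coreArc (coreArc_endpoint hp (.inr rfl))
  have hA : IsStrongSubOn (orientation m) u v A := ⟨fun _ hp => hp.1, fun x hx y hy =>
    reflTransGen_onFun_val (fun _ _ h => arc_lt h.1) ((hlinked x hx).1.trans (hlinked y hy).2)⟩
  have hinj : Set.InjOn (fun p : Fin (7 * m + 5) × Fin (7 * m + 5) => s(p.1.val, p.2.val)) A := by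
    rintro ⟨a, b⟩ hab ⟨c, d⟩ hcd h
    rcases Sym2.eq_iff.1 h with ⟨h₁, h₂⟩ | ⟨h₁, h₂⟩
    · exact Prod.ext (Fin.ext h₁) (Fin.ext h₂)
    · exact (not_arc_swap hab.1 (by rw [h₁, h₂]; exact hcd.1)).elim
  calc sdist _ u v ≤ A.ncard := sdist_le_ncard hA (Set.toFinite _)
    _ = (_ '' A).ncard := hinj.ncard_image.symm
    _ ≤ (coreEdges m (triIndex m u) (triIndex m v) : Set (Sym2 ℕ)).ncard :=
      Set.ncard_le_ncard (by rintro _ ⟨p, hp, rfl⟩; exact hp.2) (Finset.finite_toSet _)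
    _ ≤ 7 * m + 6 := by rw [Set.ncard_coe_finset]; exact card_coreEdges_le

variable {A : Set (ℕ × ℕ)}

/-- The set `{k | k < c} ∪ {7m+3, 7m+4}` contains `7m+3` but not `7m+1`, so `A` crosses its
boundary in both directions, and by `hcut` it can only do so along `xc` or `yc`. -/
lemma arcs_across_cut (hA : IsStrongSubdigraph (natGraph m) (7 * m + 3) (7 * m + 1) A)
    {c x y : ℕ} (hc : 0 < c) (hcm : c ≤ 7 * m)
    (hcut : ∀ a b, arc m a b ∨ arc m b a → a < c → c ≤ b → b < 7 * m + 3 →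
      (a = x ∨ a = y) ∧ b = c) :
    ((x, c) ∈ A ∨ (y, c) ∈ A) ∧ ((c, x) ∈ A ∨ (c, y) ∈ A) := by
  constructor
  · obtain ⟨a, b, hab, ha, hb⟩ := (hA.reach _ left_mem_arcVerts _ right_mem_arcVerts).exists_rel_not
      (P := fun k => k < c ∨ 7 * m + 3 ≤ k) (by omega) (by omega)
    have hadj := natGraph_adj.1 (hA.adj a b hab)
    have ha' : a < c := by unfold arc linkArc pendantArc at hadj; omega
    obtain ⟨rfl | rfl, rfl⟩ := hcut a b hadj ha' (by omega) (by omega)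
    exacts [.inl hab, .inr hab]
  · obtain ⟨a, b, hab, ha, hb⟩ := (hA.reach _ right_mem_arcVerts _ left_mem_arcVerts).exists_rel_not
      (P := fun k => c ≤ k ∧ k < 7 * m + 3) (by omega) (by omega)
    have hadj := natGraph_adj.1 (hA.adj a b hab)
    have hb' : b < c := by unfold arc linkArc pendantArc at hadj; omega
    obtain ⟨rfl | rfl, rfl⟩ := hcut b a hadj.symm hb' ha.1 ha.2
    exacts [.inl hab, .inr hab]

lemma linkEdge_mem_edgesOf (hA : IsStrongSubdigraph (natGraph m) (7 * m + 3) (7 * m + 1) A)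
    {j : ℕ} (hj : j < m) (r : Fin 7) : linkEdge j r ∈ edgesOf A := by
  obtain ⟨w_in, w_out⟩ := arcs_across_cut hA (c := 7 * j + 5) (x := 7 * j + 3) (y := 7 * j + 4)
    (by omega) (by omega) fun a b h => by unfold arc linkArc pendantArc at h; omega
  obtain ⟨v_in, v_out⟩ := arcs_across_cut hA (c := 7 * j + 7) (x := 7 * j + 5) (y := 7 * j + 6)
    (by omega) (by omega) fun a b h => by unfold arc linkArc pendantArc at h; omega
  obtain ⟨hvx, hxw, hwy, hyv⟩ := hA.square_of_crossing (a := 7 * j)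
    (natGraph_adj_eq_or_eq fun c h => by unfold arc linkArc pendantArc at h; omega)
    (natGraph_adj_eq_or_eq fun c h => by unfold arc linkArc pendantArc at h; omega) w_in w_out
  obtain ⟨hwz, hzv, hvw⟩ := hA.triangle_of_crossing
    (natGraph_adj_eq_or_eq fun c h => by unfold arc linkArc pendantArc at h; omega) v_in v_out
  fin_cases r <;> assumption

lemma coreEdges_subset_edgesOf (hA : IsStrongSubdigraph (natGraph m) (7 * m + 3) (7 * m + 1) A) :
    ↑(coreEdges m m (m + 1)) ⊆ edgesOf A := by
  obtain ⟨h₁, h₂, h₃⟩ := hA.pendant_triangle (x := 7 * m) (z := 7 * m + 2) right_mem_arcVerts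
    (natGraph_adj_eq_or_eq fun c h => by unfold arc linkArc pendantArc at h; omega)
    (natGraph_adj_eq_or_eq fun c h => by unfold arc linkArc pendantArc at h; omega)
  obtain ⟨h₄, h₅, h₆⟩ := hA.pendant_triangle (x := 0) (z := 7 * m + 4) left_mem_arcVerts
    (natGraph_adj_eq_or_eq fun c h => by unfold arc linkArc pendantArc at h; omega)
    (natGraph_adj_eq_or_eq fun c h => by unfold arc linkArc pendantArc at h; omega)
  intro e he
  simp only [coreEdges, Finset.coe_union, Set.mem_union, Finset.mem_coe] at he
  rcases he with (he | he) | he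
  · obtain ⟨j, hj, r, rfl⟩ := mem_linkEdges.1 he
    exact linkEdge_mem_edgesOf hA hj r
  · simp only [triEdges, hub, tip₁, tip₂, le_refl, if_true, Finset.mem_insert,
      Finset.mem_singleton] at he
    rcases he with rfl | rfl | rfl <;> assumption
  · simp only [triEdges, hub, tip₁, tip₂, Nat.not_succ_le_self, if_false, Finset.mem_insert,
      Finset.mem_singleton] at he
    rcases he with rfl | rfl | rfl <;> assumption

lemma le_sdist_tips {R : Fin (7 * m + 5) → Fin (7 * m + 5) → Prop}
    (hR : IsOrientation (graph m) R) (hs : IsStrong R) :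
    7 * m + 6 ≤ sdist R ⟨7 * m + 3, by omega⟩ ⟨7 * m + 1, by omega⟩ := by
  refine le_sdist hs fun A hA => ?_
  have hA' := (hA.isStrongSubdigraph hR (by simp)).map (G' := natGraph m) Fin.val_injective
    fun _ _ h => h
  calc 7 * m + 6 = (coreEdges m m (m + 1) : Set (Sym2 ℕ)).ncard := by
        rw [Set.ncard_coe_finset, card_coreEdges]
    _ ≤ (edgesOf (Prod.map Fin.val Fin.val '' A)).ncard :=
        Set.ncard_le_ncard (coreEdges_subset_edgesOf hA') ((A.toFinite.image _).image _)
    _ ≤ (Prod.map Fin.val Fin.val '' A).ncard := Set.ncard_image_le (A.toFinite.image _)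
    _ ≤ A.ncard := Set.ncard_image_le A.toFinite

lemma orientedSDiam_graph (m : ℕ) : orientedSDiam (graph m) = 7 * m + 6 :=
  orientedSDiam_eq (isOrientation m) (isStrong m) sdist_le
    fun _ hR hs => ⟨_, _, le_sdist_tips hR hs⟩

end SharpExample

/-- For every `γ ≥ 1` there is a connected bridgeless graph with domination
number `γ` whose oriented strong diameter equals `7γ - 1`. -/
theorem oriented_sdiam_bound_sharp (γ : ℕ) (hγ : 1 ≤ γ) :
    ∃ (n : ℕ) (G : SimpleGraph (Fin n)),
      G.Connected ∧ IsBridgeless G ∧ dominationNumber G = γ ∧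
      orientedSDiam G = 7 * γ - 1 := by
  obtain ⟨m, rfl⟩ : ∃ m, γ = m + 1 := ⟨γ - 1, by omega⟩
  refine ⟨7 * m + 5, SharpExample.graph m, SharpExample.connected m, SharpExample.isBridgeless m,
    SharpExample.dominationNumber_graph m, ?_⟩
  rw [SharpExample.orientedSDiam_graph]
  omega
end

section
/- Let (G,D) be a standard pair, suppose G is not a triangle, and let G⃗ be any strong orientation of G. Then for every dominated vertex u ∈ V(G)∖D and every dominating vertex v ∈ D, θ(u,v) ≤ diam(G⃗) − 2. -/
open SimpleGraph

variable {V : Type*}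

section MyHelpers
variable {R : V → V → Prop}

lemma hasDirWalk_zero (u : V) : HasDirWalk R u u 0 :=
  ⟨fun _ => u, rfl, rfl, fun i => i.elim0⟩

lemma hasDirWalk_one {u v : V} (h : R u v) : HasDirWalk R u v 1 :=
  ⟨![u, v], rfl, rfl, fun i => by fin_cases i; exact h⟩

lemma HasDirWalk.snoc {u v w : V} {n : ℕ} (h : HasDirWalk R u v n) (hr : R v w) :
    HasDirWalk R u w (n + 1) := by
  obtain ⟨f, h0, hl, ha⟩ := h
  refine ⟨fun i => if hi : (i : ℕ) < n + 1 then f ⟨i, hi⟩ else w, ?_, ?_, ?_⟩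
  · simpa using h0
  · simp [Fin.last]
  · intro i
    rcases lt_or_eq_of_le (Nat.lt_succ_iff.mp i.isLt) with hi | hi
    · have h1 : ((i.castSucc : Fin (n+2)) : ℕ) < n + 1 := by simp [i.isLt]
      have h2 : ((i.succ : Fin (n+2)) : ℕ) < n + 1 := by simpa using hi
      simp only [dif_pos h1, dif_pos h2]
      exact ha ⟨i, hi⟩
    · have h1 : ((i.castSucc : Fin (n+2)) : ℕ) < n + 1 := by simp [i.isLt]
      have h2 : ¬ ((i.succ : Fin (n+2)) : ℕ) < n + 1 := by simp [hi]
      simp only [dif_pos h1, dif_neg h2]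
      have : f ⟨(i.castSucc : ℕ), h1⟩ = v := by
        rw [← hl]; congr 1; ext; simp [Fin.last, hi]
      rw [this]; exact hr

lemma hasDirWalk_zero_eq {u v : V} (h : HasDirWalk R u v 0) : u = v := by
  obtain ⟨f, h0, hl, _⟩ := h
  rw [← h0, ← hl]; rfl

lemma hasDirWalk_one_rel {u v : V} (h : HasDirWalk R u v 1) : R u v := by
  obtain ⟨f, h0, hl, ha⟩ := h
  have := ha 0
  rw [show (0 : Fin 1).castSucc = 0 from rfl, h0,
      show (0 : Fin 1).succ = Fin.last 1 from rfl, hl] at this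
  exact this

lemma hasDirWalk_last {u w : V} {n : ℕ} (h : HasDirWalk R u w (n + 1)) :
    ∃ x, HasDirWalk R u x n ∧ R x w := by
  obtain ⟨f, h0, hl, ha⟩ := h
  refine ⟨f (Fin.last n).castSucc, ⟨fun i => f i.castSucc, by simpa using h0, rfl, fun i => ?_⟩, ?_⟩
  · have := ha i.castSucc
    show R (f i.castSucc.castSucc) (f i.succ.castSucc)
    rwa [Fin.succ_castSucc] at this
  · have := ha (Fin.last n)
    rwa [Fin.succ_last, hl] at this

lemma hasDirWalk_first {u w : V} {n : ℕ} (h : HasDirWalk R u w (n + 1)) :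
    ∃ x, R u x ∧ HasDirWalk R x w n := by
  obtain ⟨f, h0, hl, ha⟩ := h
  refine ⟨f (0 : Fin (n+1)).succ, ?_, ⟨fun i => f i.succ, rfl, ?_, fun i => ?_⟩⟩
  · have := ha 0
    rwa [Fin.castSucc_zero, h0] at this
  · show f (Fin.last n).succ = w
    rw [Fin.succ_last]; exact hl
  · have := ha i.succ
    show R (f i.castSucc.succ) (f i.succ.succ)
    rwa [← Fin.succ_castSucc] at this

lemma ddist_le {u v : V} {n : ℕ} (h : HasDirWalk R u v n) : ddist R u v ≤ n := Nat.sInf_le h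

lemma ddist_walk (hstr : IsStrong R) (u v : V) : HasDirWalk R u v (ddist R u v) :=
  Nat.sInf_mem (hstr u v)

lemma rel_of_ddist_le_one (hstr : IsStrong R) {u v : V} (hne : u ≠ v)
    (h : ddist R u v ≤ 1) : R u v := by
  have hw := ddist_walk hstr u v
  interval_cases hd : (ddist R u v)
  · exact absurd (hasDirWalk_zero_eq hw) hne
  · exact hasDirWalk_one_rel hw

lemma ddist_in (hstr : IsStrong R) {w y u : V} (hin : ∀ x, R x w → x = y) (hne : u ≠ w) :
    ddist R u y + 1 ≤ ddist R u w := by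
  have hw := ddist_walk hstr u w
  rcases hn : ddist R u w with _ | m
  · rw [hn] at hw; exact absurd (hasDirWalk_zero_eq hw) hne
  · rw [hn] at hw
    obtain ⟨x, hx, hr⟩ := hasDirWalk_last hw
    rw [hin x hr] at hx
    exact Nat.add_le_add_right (ddist_le hx) 1

lemma ddist_out (hstr : IsStrong R) {w y u : V} (hout : ∀ x, R w x → x = y) (hne : w ≠ u) :
    ddist R y u + 1 ≤ ddist R w u := by
  have hw := ddist_walk hstr w u
  rcases hn : ddist R w u with _ | m
  · rw [hn] at hw; exact absurd (hasDirWalk_zero_eq hw) hne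
  · rw [hn] at hw
    obtain ⟨x, hr, hx⟩ := hasDirWalk_first hw
    rw [hout x hr] at hx
    exact Nat.add_le_add_right (ddist_le hx) 1

lemma ddist_le_diam [Fintype V] (a b : V) : ddist R a b ≤ diamOr R :=
  le_trans (le_max_left _ _)
    (Finset.le_sup (f := fun p : V × V => theta R p.1 p.2) (Finset.mem_univ (a, b)))

end MyHelpers

lemma key_lemma [Fintype V] {G : SimpleGraph V} {R : V → V → Prop}
    (hor : IsOrientation G R) (hstr : IsStrong R)
    {u v a b : V}
    (hNa : G.neighborSet a = {v, b}) (hNb : G.neighborSet b = {a, v})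
    (Rva : R v a) (Rab : R a b) (Rbv : R b v)
    (hx : ∃ x : V, x ≠ v ∧ x ≠ a ∧ x ≠ b) :
    theta R u v ≤ diamOr R - 2 := by
  have hav : a ≠ v := (hor.1 v a Rva).ne'
  have hbv : b ≠ v := (hor.1 b v Rbv).ne
  have hab : a ≠ b := (hor.1 a b Rab).ne
  have hin_a : ∀ x, R x a → x = v := by
    intro x hr
    have hm : x ∈ G.neighborSet a := (hor.1 x a hr).symm
    rw [hNa] at hm
    simp only [Set.mem_insert_iff, Set.mem_singleton_iff] at hm
    rcases hm with h | h
    · exact h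
    · exact absurd (h ▸ hr) (hor.2.2 a b Rab)
  have hin_b : ∀ x, R x b → x = a := by
    intro x hr
    have hm : x ∈ G.neighborSet b := (hor.1 x b hr).symm
    rw [hNb] at hm
    simp only [Set.mem_insert_iff, Set.mem_singleton_iff] at hm
    rcases hm with h | h
    · exact h
    · exact absurd (h ▸ hr) (hor.2.2 b v Rbv)
  have hout_a : ∀ x, R a x → x = b := by
    intro x hr
    have hm : x ∈ G.neighborSet a := hor.1 a x hr
    rw [hNa] at hm
    simp only [Set.mem_insert_iff, Set.mem_singleton_iff] at hm
    rcases hm with h | h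
    · exact absurd (h ▸ hr) (hor.2.2 v a Rva)
    · exact h
  have hout_b : ∀ x, R b x → x = v := by
    intro x hr
    have hm : x ∈ G.neighborSet b := hor.1 b x hr
    rw [hNb] at hm
    simp only [Set.mem_insert_iff, Set.mem_singleton_iff] at hm
    rcases hm with h | h
    · exact absurd (h ▸ hr) (hor.2.2 a b Rab)
    · exact h
  have diam4 : 4 ≤ diamOr R := by
    obtain ⟨x, hxv, hxa, hxb⟩ := hx
    have h2 : 2 ≤ ddist R x v ∨ 2 ≤ ddist R v x := by
      by_contra hcon
      push_neg at hcon
      exact hor.2.2 x v (rel_of_ddist_le_one hstr hxv (by omega))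
        (rel_of_ddist_le_one hstr hxv.symm (by omega))
    rcases h2 with h2 | h2
    · have e1 := ddist_in hstr hin_a hxa
      have e2 := ddist_in hstr hin_b hxb
      have e3 := ddist_le_diam (R := R) x b
      omega
    · have e1 := ddist_out hstr hout_b (Ne.symm hxb)
      have e2 := ddist_out hstr hout_a (Ne.symm hxa)
      have e3 := ddist_le_diam (R := R) a x
      omega
  by_cases hua : u = a
  · subst hua
    have h1 : ddist R u v ≤ 2 := ddist_le ((hasDirWalk_one Rab).snoc Rbv)
    have h2 : ddist R v u ≤ 1 := ddist_le (hasDirWalk_one Rva)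
    exact max_le (by omega) (by omega)
  by_cases hub : u = b
  · subst hub
    have h1 : ddist R u v ≤ 1 := ddist_le (hasDirWalk_one Rbv)
    have h2 : ddist R v u ≤ 2 := ddist_le ((hasDirWalk_one Rva).snoc Rab)
    exact max_le (by omega) (by omega)
  · have h1 := ddist_in hstr hin_a hua
    have h2 := ddist_in hstr hin_b hub
    have h3 := ddist_out hstr hout_b (Ne.symm hub)
    have h4 := ddist_out hstr hout_a (Ne.symm hua)
    have h5 := ddist_le_diam (R := R) u b
    have h6 := ddist_le_diam (R := R) a u
    exact max_le (by omega) (by omega)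

/-- In a standard pair `(G, D)` where `G` is not a triangle, any strong
orientation satisfies `θ(u,v) ≤ diam - 2` for `u ∉ D` and `v ∈ D`. -/
theorem theta_le_diam_sub_two {V : Type*} [Fintype V]
    (G : SimpleGraph V) (D : Set V) (hstd : IsStandardPair G D)
    (hnottri : ¬ Nonempty (G ≃g (⊤ : SimpleGraph (Fin 3))))
    (R : V → V → Prop) (hor : IsOrientation G R) (hstr : IsStrong R)
    (u v : V) (hu : u ∉ D) (hv : v ∈ D) :
    theta R u v ≤ diamOr R - 2 := by
  classical
  obtain ⟨hbr, hind, hdom, htri⟩ := hstd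
  obtain ⟨v₁, v₂, hA1, hA2, hA3, hd1, hd2⟩ := htri v hv
  have huv : u ≠ v := fun h => hu (h ▸ hv)
  have hvv1 : v ≠ v₁ := hA1.ne
  have hvv2 : v ≠ v₂ := hA3.ne'
  have h12 : v₁ ≠ v₂ := hA2.ne
  have hN1 : G.neighborSet v₁ = {v, v₂} := by
    refine (Set.eq_of_subset_of_ncard_le ?_ ?_ (Set.toFinite _)).symm
    · intro x hx
      simp only [Set.mem_insert_iff, Set.mem_singleton_iff] at hx
      rcases hx with h | h
      · exact h ▸ hA1.symm
      · exact h ▸ hA2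
    · rw [hd1, Set.ncard_pair hvv2]
  have hN2 : G.neighborSet v₂ = {v₁, v} := by
    refine (Set.eq_of_subset_of_ncard_le ?_ ?_ (Set.toFinite _)).symm
    · intro x hx
      simp only [Set.mem_insert_iff, Set.mem_singleton_iff] at hx
      rcases hx with h | h
      · exact h ▸ hA2.symm
      · exact h ▸ hA3
    · rw [hd2, Set.ncard_pair hvv1.symm]
  have hx : ∃ x : V, x ≠ v ∧ x ≠ v₁ ∧ x ≠ v₂ := by
    by_contra hc
    push_neg at hc
    have hclass : ∀ x : V, x = v ∨ x = v₁ ∨ x = v₂ := by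
      intro x
      by_cases h1 : x = v
      · exact Or.inl h1
      by_cases h2 : x = v₁
      · exact Or.inr (Or.inl h2)
      · exact Or.inr (Or.inr (hc x h1 h2))
    have hadj : ∀ x y : V, G.Adj x y ↔ x ≠ y := by
      intro x y
      constructor
      · exact Adj.ne
      · intro hne
        rcases hclass x with hxx | hxx | hxx <;> rcases hclass y with hyy | hyy | hyy <;>
          subst hxx <;> subst hyy <;>
          first
            | exact absurd rfl hne
            | exact hA1 | exact hA2 | exact hA3
            | exact hA1.symm | exact hA2.symm | exact hA3.symm
    have e : V ≃ Fin 3 :=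
      ⟨fun x => if x = v then 0 else if x = v₁ then 1 else 2,
       ![v, v₁, v₂],
       by intro x
          rcases hclass x with h | h | h <;> subst h <;>
            simp [hvv1.symm, hvv2.symm, h12.symm, hvv1, hvv2, h12],
       by intro i
          fin_cases i <;> simp [hvv1.symm, hvv2.symm, h12.symm, hvv1, hvv2, h12]⟩
    exact hnottri ⟨⟨e, by
      intro x y
      simp only [top_adj, ne_eq, EmbeddingLike.apply_eq_iff_eq, hadj x y]⟩⟩
  rcases hor.2.1 v₁ v₂ hA2 with h12R | h21R
  · have Rbv : R v₂ v := by
      by_contra hcon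
      have hw := ddist_walk hstr v₂ v
      rcases hn : ddist R v₂ v with _ | m
      · rw [hn] at hw; exact hvv2 (hasDirWalk_zero_eq hw).symm
      · rw [hn] at hw
        obtain ⟨x, hr, -⟩ := hasDirWalk_first hw
        have hm : x ∈ G.neighborSet v₂ := hor.1 _ _ hr
        rw [hN2] at hm
        simp only [Set.mem_insert_iff, Set.mem_singleton_iff] at hm
        rcases hm with h | h
        · exact hor.2.2 v₁ v₂ h12R (h ▸ hr)
        · exact hcon (h ▸ hr)
    have Rva : R v v₁ := by
      by_contra hcon
      have hw := ddist_walk hstr v v₁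
      rcases hn : ddist R v v₁ with _ | m
      · rw [hn] at hw; exact hvv1 (hasDirWalk_zero_eq hw)
      · rw [hn] at hw
        obtain ⟨x, -, hr⟩ := hasDirWalk_last hw
        have hm : x ∈ G.neighborSet v₁ := (hor.1 _ _ hr).symm
        rw [hN1] at hm
        simp only [Set.mem_insert_iff, Set.mem_singleton_iff] at hm
        rcases hm with h | h
        · exact hcon (h ▸ hr)
        · exact hor.2.2 v₁ v₂ h12R (h ▸ hr)
    exact key_lemma hor hstr hN1 (by rw [hN2]) Rva h12R Rbv hx
  · -- symmetric: R v₂ v₁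
    have Rbv : R v₁ v := by
      by_contra hcon
      have hw := ddist_walk hstr v₁ v
      rcases hn : ddist R v₁ v with _ | m
      · rw [hn] at hw; exact hvv1 (hasDirWalk_zero_eq hw).symm
      · rw [hn] at hw
        obtain ⟨x, hr, -⟩ := hasDirWalk_first hw
        have hm : x ∈ G.neighborSet v₁ := hor.1 _ _ hr
        rw [hN1] at hm
        simp only [Set.mem_insert_iff, Set.mem_singleton_iff] at hm
        rcases hm with h | h
        · exact hcon (h ▸ hr)
        · exact hor.2.2 v₂ v₁ h21R (h ▸ hr)
    have Rva : R v v₂ := by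
      by_contra hcon
      have hw := ddist_walk hstr v v₂
      rcases hn : ddist R v v₂ with _ | m
      · rw [hn] at hw; exact hvv2 (hasDirWalk_zero_eq hw)
      · rw [hn] at hw
        obtain ⟨x, -, hr⟩ := hasDirWalk_last hw
        have hm : x ∈ G.neighborSet v₂ := (hor.1 _ _ hr).symm
        rw [hN2] at hm
        simp only [Set.mem_insert_iff, Set.mem_singleton_iff] at hm
        rcases hm with h | h
        · exact hor.2.2 v₂ v₁ h21R (h ▸ hr)
        · exact hcon (h ▸ hr)
    refine key_lemma hor hstr (a := v₂) (b := v₁) ?_ ?_ Rva h21R Rbv ?_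
    · rw [hN2, Set.pair_comm]
    · rw [hN1, Set.pair_comm]
    · obtain ⟨x, h1, h2, h3⟩ := hx
      exact ⟨x, h1, h3, h2⟩
end

section
/- Let G be a graph with a strong orientation G⃗, and let v, v₁, v₂ be vertices such that v v₁ v₂ v is a triangle in G and deg_G(v₁) = deg_G(v₂) = 2. Then in G⃗ the triangle v v₁ v₂ v is oriented as a directed triangle (i.e., its three edges form a directed cycle). -/
open SimpleGraph

variable {V : Type*}

lemma arc_into {R : V → V → Prop} (hstr : IsStrong R) {u w : V} (h : u ≠ w) :
    ∃ x, R x w := by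
  obtain ⟨n, f, hf0, hfl, hstep⟩ := hstr u w
  cases n with
  | zero => exact absurd (hf0 ▸ hfl ▸ rfl) h
  | succ m =>
      refine ⟨f (Fin.last m).castSucc, ?_⟩
      have := hstep (Fin.last m)
      have hl : (Fin.last m).succ = Fin.last (m+1) := by
        ext; simp [Fin.last]
      rw [hl, hfl] at this
      exact this

lemma arc_out {R : V → V → Prop} (hstr : IsStrong R) {u w : V} (h : w ≠ u) :
    ∃ x, R w x := by
  obtain ⟨n, f, hf0, hfl, hstep⟩ := hstr w u
  cases n with
  | zero => exact absurd (hf0 ▸ hfl ▸ rfl) h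
  | succ m =>
      refine ⟨f (0 : Fin (m+1)).succ, ?_⟩
      have := hstep 0
      have h0 : ((0 : Fin (m+1)).castSucc) = 0 := rfl
      rw [h0, hf0] at this
      exact this

/-- In a strong orientation, a triangle `v v₁ v₂ v` whose vertices `v₁, v₂`
have degree 2 in `G` is oriented as a directed triangle. -/
theorem isolated_triangle_directed {V : Type*} [Fintype V]
    (G : SimpleGraph V) (R : V → V → Prop)
    (hor : IsOrientation G R) (hstr : IsStrong R)
    (v v₁ v₂ : V) (h1 : G.Adj v v₁) (h2 : G.Adj v₁ v₂) (h3 : G.Adj v₂ v)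
    (hd1 : (G.neighborSet v₁).ncard = 2) (hd2 : (G.neighborSet v₂).ncard = 2) :
    (R v v₁ ∧ R v₁ v₂ ∧ R v₂ v) ∨ (R v₁ v ∧ R v₂ v₁ ∧ R v v₂) := by
  obtain ⟨hRG, hcov, hasym⟩ := hor
  have hn1 : G.neighborSet v₁ = {v, v₂} := by
    refine (Set.eq_of_subset_of_ncard_le ?_ ?_ (Set.toFinite _)).symm
    · intro x hx
      rcases hx with h | h
      · subst h; exact h1.symm
      · simp only [Set.mem_singleton_iff] at h; subst h; exact h2
    · rw [hd1, Set.ncard_pair h3.ne.symm]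
  have hn2 : G.neighborSet v₂ = {v₁, v} := by
    refine (Set.eq_of_subset_of_ncard_le ?_ ?_ (Set.toFinite _)).symm
    · intro x hx
      rcases hx with h | h
      · subst h; exact h2.symm
      · simp only [Set.mem_singleton_iff] at h; subst h; exact h3
    · rw [hd2, Set.ncard_pair h1.ne.symm]
  rcases hcov _ _ h2 with h12 | h21
  · left
    refine ⟨?_, h12, ?_⟩
    · obtain ⟨x, hx⟩ := arc_into hstr h1.ne
      have hxmem : x ∈ G.neighborSet v₁ := (hRG _ _ hx).symm
      rw [hn1] at hxmem
      rcases hxmem with h | h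
      · subst h; exact hx
      · simp only [Set.mem_singleton_iff] at h; subst h
        exact absurd hx (hasym _ _ h12)
    · obtain ⟨x, hx⟩ := arc_out hstr h3.ne
      have hxmem : x ∈ G.neighborSet v₂ := hRG _ _ hx
      rw [hn2] at hxmem
      rcases hxmem with h | h
      · subst h; exact absurd h12 (hasym _ _ hx)
      · simp only [Set.mem_singleton_iff] at h; subst h; exact hx
  · right
    refine ⟨?_, h21, ?_⟩
    · obtain ⟨x, hx⟩ := arc_out hstr h1.ne.symm
      have hxmem : x ∈ G.neighborSet v₁ := hRG _ _ hx
      rw [hn1] at hxmem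
      rcases hxmem with h | h
      · subst h; exact hx
      · simp only [Set.mem_singleton_iff] at h; subst h
        exact absurd h21 (hasym _ _ hx)
    · obtain ⟨x, hx⟩ := arc_into hstr h3.ne.symm
      have hxmem : x ∈ G.neighborSet v₂ := (hRG _ _ hx).symm
      rw [hn2] at hxmem
      rcases hxmem with h | h
      · subst h; exact absurd hx (hasym _ _ h21)
      · simp only [Set.mem_singleton_iff] at h; subst h; exact hx
end

section
/- Let (G,D) be a standard pair with |D| = 1. Then G admits a strong orientation G⃗ with diam(G⃗) ≤ 4. -/
open SimpleGraph

variable {V : Type*}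

/-! With `D = {d}`, every vertex other than `d` is adjacent to `d`, and since the edge to `d` is
not a bridge it also has a neighbour other than `d`. So `G - d` has no isolated vertex, and by
Ore's theorem (the complement of a minimal dominating set is dominating) its vertices split into
two classes such that every vertex has a neighbour in the other class. Orient the edges
`d → first class → second class → d`, the remaining ones arbitrarily: every vertex then reaches
`d`, and is reached from `d`, in at most two steps, so the diameter is at most `4`. -/

namespace HasDirWalk

variable {R : V → V → Prop} {u v w : V} {m n : ℕ}

lemma refl (R : V → V → Prop) (u : V) : HasDirWalk R u u 0 :=
  ⟨fun _ => u, rfl, rfl, fun i => i.elim0⟩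

lemma eq_of_zero (h : HasDirWalk R u v 0) : u = v := by
  obtain ⟨f, rfl, rfl, -⟩ := h
  rfl

lemma cons (huv : R u v) (h : HasDirWalk R v w n) : HasDirWalk R u w (n + 1) := by
  obtain ⟨f, rfl, rfl, hf⟩ := h
  refine ⟨Fin.cons u f, rfl, by rw [← Fin.succ_last, Fin.cons_succ], Fin.cases ?_ fun i => ?_⟩
  · simpa using huv
  · simpa [← Fin.succ_castSucc] using hf i

lemma single (huv : R u v) : HasDirWalk R u v 1 := (refl R v).cons huv

lemma exists_of_succ (h : HasDirWalk R u w (n + 1)) : ∃ v, R u v ∧ HasDirWalk R v w n := by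
  obtain ⟨f, rfl, rfl, hf⟩ := h
  refine ⟨f 1, by simpa using hf 0, Fin.tail f, rfl, by simp [Fin.tail], fun i => ?_⟩
  simpa [Fin.tail, ← Fin.succ_castSucc] using hf i.succ

lemma trans (h₁ : HasDirWalk R u v m) (h₂ : HasDirWalk R v w n) :
    HasDirWalk R u w (m + n) := by
  induction m generalizing u with
  | zero => rw [h₁.eq_of_zero, Nat.zero_add]; exact h₂
  | succ m ih =>
    obtain ⟨x, hux, hx⟩ := h₁.exists_of_succ
    rw [Nat.add_right_comm]
    exact (ih hx).cons hux

end HasDirWalk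

lemma ddist_le_of_hasDirWalk {R : V → V → Prop} {u v : V} {n : ℕ} (h : HasDirWalk R u v n) :
    ddist R u v ≤ n :=
  Nat.sInf_le h

lemma IsDominating.compl_of_minimal {G : SimpleGraph V} {D : Set V}
    (hG : ∀ v, ∃ w, G.Adj v w) (hD : Minimal (IsDominating G) D) : IsDominating G Dᶜ := by
  intro v hv
  rw [Set.notMem_compl_iff] at hv
  by_contra! hnbr
  suffices IsDominating G (D \ {v}) from (hD.2 this Set.sdiff_subset hv).2 rfl
  intro x hx
  by_cases hxv : x = v
  · subst hxv
    obtain ⟨w, hxw⟩ := hG x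
    exact ⟨w, ⟨not_not.1 fun hw => hnbr w hw hxw.symm, hxw.ne'⟩, hxw.symm⟩
  · have hxD : x ∉ D := fun h => hx ⟨h, hxv⟩
    obtain ⟨u, huD, hux⟩ := hD.1 x hxD
    refine ⟨u, ⟨huD, ?_⟩, hux⟩
    rintro rfl
    exact hnbr x hxD hux.symm

lemma exists_set_forall_exists_adj_mem_iff_notMem [Finite V] {G : SimpleGraph V}
    (hG : ∀ v, ∃ w, G.Adj v w) : ∃ S : Set V, ∀ v, ∃ w, G.Adj v w ∧ (w ∈ S ↔ v ∉ S) := by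
  obtain ⟨D, hD⟩ := exists_minimal_of_wellFoundedLT (IsDominating G)
    ⟨Set.univ, fun v hv => absurd (Set.mem_univ v) hv⟩
  refine ⟨D, fun v => ?_⟩
  by_cases hv : v ∈ D
  · obtain ⟨w, hw, hwv⟩ := IsDominating.compl_of_minimal hG hD v (by simpa using hv)
    exact ⟨w, hwv.symm, by simp_all⟩
  · obtain ⟨w, hw, hwv⟩ := hD.1 v hv
    exact ⟨w, hwv.symm, by simp_all⟩

lemma IsBridgeless.exists_adj_ne {G : SimpleGraph V} (hG : IsBridgeless G) {u d : V}
    (hud : G.Adj u d) : ∃ w, w ≠ d ∧ G.Adj u w := by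
  obtain ⟨p, hp⟩ := reachable_deleteEdges_iff_exists_walk.1 (not_not.1 (hG s(u, d)))
  cases p with
  | nil => exact absurd rfl hud.ne
  | @cons _ w _ huw _ =>
    refine ⟨w, ?_, huw⟩
    rintro rfl
    simp at hp

def extendOrientation (G : SimpleGraph V) (P : V → V → Prop) : V → V → Prop :=
  fun u v => G.Adj u v ∧ (P u v ∨ ¬ P v u ∧ WellOrderingRel u v)

lemma extendOrientation_of_adj {G : SimpleGraph V} {P : V → V → Prop} {u v : V}
    (huv : G.Adj u v) (hP : P u v) : extendOrientation G P u v :=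
  ⟨huv, Or.inl hP⟩

lemma isOrientation_extendOrientation (G : SimpleGraph V) {P : V → V → Prop}
    (hP : ∀ u v, P u v → ¬ P v u) : IsOrientation G (extendOrientation G P) := by
  refine ⟨fun u v h => h.1, fun u v huv => ?_, ?_⟩
  · by_cases hPuv : P u v
    · exact Or.inl ⟨huv, Or.inl hPuv⟩
    by_cases hPvu : P v u
    · exact Or.inr ⟨huv.symm, Or.inl hPvu⟩
    rcases trichotomous_of WellOrderingRel u v with h | rfl | h
    · exact Or.inl ⟨huv, Or.inr ⟨hPvu, h⟩⟩
    · exact (G.irrefl huv).elim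
    · exact Or.inr ⟨huv.symm, Or.inr ⟨hPuv, h⟩⟩
  · rintro u v ⟨-, huv | ⟨hvu, huv⟩⟩ ⟨-, hvu' | ⟨huv', hvu'⟩⟩
    · exact hP u v huv hvu'
    · exact huv' huv
    · exact hvu hvu'
    · exact asymm huv hvu'

section Hub

/- `κ` labels the hub `d` by `0` and the two classes by `1` and `2`; the preferred arcs are the
edges along which the label goes up by one mod 3. -/

variable {G : SimpleGraph V} {R : V → V → Prop} {d : V} {k : ℕ} {κ : V → ZMod 3}

lemma exists_hasDirWalk_le_of_hub (hto : ∀ u, ∃ n ≤ k, HasDirWalk R u d n)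
    (hfrom : ∀ u, ∃ n ≤ k, HasDirWalk R d u n) (u v : V) :
    ∃ n ≤ 2 * k, HasDirWalk R u v n := by
  obtain ⟨m, hm, hud⟩ := hto u
  obtain ⟨n, hn, hdv⟩ := hfrom v
  exact ⟨m + n, by omega, hud.trans hdv⟩

lemma isStrong_of_hub (hto : ∀ u, ∃ n ≤ k, HasDirWalk R u d n)
    (hfrom : ∀ u, ∃ n ≤ k, HasDirWalk R d u n) : IsStrong R := fun u v =>
  (exists_hasDirWalk_le_of_hub hto hfrom u v).imp fun _ h => h.2

lemma diamOr_le_of_hub [Fintype V] (hto : ∀ u, ∃ n ≤ k, HasDirWalk R u d n)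
    (hfrom : ∀ u, ∃ n ≤ k, HasDirWalk R d u n) : diamOr R ≤ 2 * k := by
  have hdist (u v : V) : ddist R u v ≤ 2 * k := by
    obtain ⟨n, hn, h⟩ := exists_hasDirWalk_le_of_hub hto hfrom u v
    exact (ddist_le_of_hasDirWalk h).trans hn
  exact Finset.sup_le fun p _ => max_le (hdist _ _) (hdist _ _)

lemma exists_hasDirWalk_to_hub (hR : ∀ u v, G.Adj u v → κ v = κ u + 1 → R u v)
    (hκ : ∀ u, κ u = 0 ↔ u = d) (hd : ∀ u, u ≠ d → G.Adj d u)
    (hmix : ∀ u, u ≠ d → ∃ w, G.Adj u w ∧ κ w ≠ 0 ∧ κ w ≠ κ u) (u : V) :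
    ∃ n ≤ 2, HasDirWalk R u d n := by
  by_cases hu : u = d
  · exact ⟨0, by omega, hu ▸ HasDirWalk.refl R u⟩
  obtain ⟨w, huw, hw, hwu⟩ := hmix u hu
  have hκd : κ d = 0 := (hκ d).2 rfl
  have hlabels : ∀ a b : ZMod 3, a ≠ 0 → b ≠ 0 → b ≠ a → 0 = a + 1 ∨ b = a + 1 ∧ 0 = b + 1 := by
    decide
  rcases hlabels _ _ ((hκ u).not.2 hu) hw hwu with h | ⟨h₁, h₂⟩
  · exact ⟨1, by omega, .single (hR u d (hd u hu).symm (hκd ▸ h))⟩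
  · refine ⟨2, le_rfl, .cons (hR u w huw h₁) (.single (hR w d (hd w ?_).symm (hκd ▸ h₂)))⟩
    exact (hκ w).not.1 hw

lemma exists_hasDirWalk_from_hub (hR : ∀ u v, G.Adj u v → κ v = κ u + 1 → R u v)
    (hκ : ∀ u, κ u = 0 ↔ u = d) (hd : ∀ u, u ≠ d → G.Adj d u)
    (hmix : ∀ u, u ≠ d → ∃ w, G.Adj u w ∧ κ w ≠ 0 ∧ κ w ≠ κ u) (u : V) :
    ∃ n ≤ 2, HasDirWalk R d u n := by
  by_cases hu : u = d
  · exact ⟨0, by omega, hu ▸ HasDirWalk.refl R u⟩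
  obtain ⟨w, huw, hw, hwu⟩ := hmix u hu
  have hκd : κ d = 0 := (hκ d).2 rfl
  have hlabels : ∀ a b : ZMod 3, a ≠ 0 → b ≠ 0 → b ≠ a → a = 0 + 1 ∨ b = 0 + 1 ∧ a = b + 1 := by
    decide
  rcases hlabels _ _ ((hκ u).not.2 hu) hw hwu with h | ⟨h₁, h₂⟩
  · exact ⟨1, by omega, .single (hR d u (hd u hu) (hκd ▸ h))⟩
  · refine ⟨2, le_rfl, .cons (hR d w (hd w ?_) (hκd ▸ h₁)) (.single (hR w u huw.symm h₂))⟩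
    exact (hκ w).not.1 hw

end Hub

lemma exists_hub_labelling [Finite V] {G : SimpleGraph V} {d : V}
    (hG : ∀ u, u ≠ d → ∃ w, w ≠ d ∧ G.Adj u w) :
    ∃ κ : V → ZMod 3, (∀ u, κ u = 0 ↔ u = d) ∧
      ∀ u, u ≠ d → ∃ w, G.Adj u w ∧ κ w ≠ 0 ∧ κ w ≠ κ u := by
  classical
  obtain ⟨S, hS⟩ := exists_set_forall_exists_adj_mem_iff_notMem (G := G.induce {d}ᶜ)
    fun u =>
      let ⟨w, hw, huw⟩ := hG u u.2
      ⟨⟨w, hw⟩, huw⟩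
  let κ : V → ZMod 3 := fun v => if hv : v = d then 0 else if ⟨v, hv⟩ ∈ S then 1 else 2
  refine ⟨κ, fun u => ?_, fun u hu => ?_⟩
  · by_cases hu : u = d
    · simp [κ, hu]
    · simp only [κ, dif_neg hu, hu, iff_false]
      split_ifs <;> decide
  · obtain ⟨⟨w, hw⟩, huw, hwS⟩ := hS ⟨u, hu⟩
    refine ⟨w, huw, ?_⟩
    have hw' : w ≠ d := hw
    simp only [κ, dif_neg hu, dif_neg hw']
    split_ifs <;> simp_all <;> decide

/-- A standard pair with `|D| = 1` admits a strong orientation with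
diameter at most 4. -/
theorem diam_le_four_of_domination_one {V : Type*} [Fintype V]
    (G : SimpleGraph V) (D : Set V) (hstd : IsStandardPair G D)
    (hD : D.ncard = 1) :
    ∃ R : V → V → Prop, IsOrientation G R ∧ IsStrong R ∧ diamOr R ≤ 4 := by
  obtain ⟨d, rfl⟩ := Set.ncard_eq_one.mp hD
  obtain ⟨hbr, -, hdom, -⟩ := hstd
  have hd : ∀ u, u ≠ d → G.Adj d u := fun u hu => by
    obtain ⟨x, ⟨rfl, hxu⟩, -⟩ := hdom u hu
    exact hxu
  obtain ⟨κ, hκ, hmix⟩ := exists_hub_labelling fun u hu => hbr.exists_adj_ne (hd u hu).symm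
  let P : V → V → Prop := fun u v => κ v = κ u + 1
  have hP : ∀ u v, P u v → ¬ P v u := by
    have : ∀ a b : ZMod 3, b = a + 1 → a ≠ b + 1 := by decide
    exact fun u v => this _ _
  have hR : ∀ u v, G.Adj u v → P u v → extendOrientation G P u v :=
    fun _ _ => extendOrientation_of_adj
  have hto := exists_hasDirWalk_to_hub hR hκ hd hmix
  have hfrom := exists_hasDirWalk_from_hub hR hκ hd hmix
  exact ⟨extendOrientation G P, isOrientation_extendOrientation G hP,
    isStrong_of_hub hto hfrom, diamOr_le_of_hub hto hfrom⟩
end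

section
/- Let (G,D) be a standard pair with |D| = 1 and dominating vertex v. Then G admits a strong orientation in which every dominated vertex lies on a directed triangle through v. -/
open SimpleGraph

variable {V : Type*}

/-! Every vertex `u ≠ v` is adjacent to `v`, and since `uv` is not a bridge, `u` also has a
neighbour in `G - v`. Colouring each component of `G - v` by the parity of the distance to a
fixed root gives every such `u` a neighbour `w ≠ v` of the other colour. Orienting
`v → even → odd → v` (and all other edges arbitrarily) makes `v u w` a directed triangle, and
these triangles through `v` make the orientation strong. -/

namespace SimpleGraph

variable {G : SimpleGraph V}

lemma exists_adj_ne_of_not_isBridge {u v : V} (huv : u ≠ v) (h : ¬ G.IsBridge s(u, v)) :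
    ∃ w, G.Adj u w ∧ w ≠ v := by
  obtain ⟨p⟩ := not_not.1 (isBridge_iff.not.1 h)
  cases p with
  | nil => exact absurd rfl huv
  | cons hw _ =>
    rw [deleteEdges_adj] at hw
    exact ⟨_, hw.1, by rintro rfl; exact hw.2 rfl⟩

lemma Reachable.exists_adj_dist_add_one_eq {r u : V} (h : G.Reachable r u) (hru : r ≠ u) :
    ∃ w, G.Adj u w ∧ G.dist r w + 1 = G.dist r u := by
  obtain ⟨p, hp⟩ := h.symm.exists_walk_length_eq_dist
  cases p with
  | nil => exact absurd rfl hru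
  | cons huw q =>
    refine ⟨_, huw, ?_⟩
    have hle : G.dist r _ ≤ q.length := dist_comm.trans_le (dist_le q)
    have hge := huw.diff_dist_adj (u := r)
    rw [dist_comm, Walk.length_cons] at hp
    omega

noncomputable def distParity (G : SimpleGraph V) (u : V) : Bool :=
  (G.dist (G.connectedComponentMk u).out u).bodd

lemma exists_adj_distParity_ne {u w₀ : V} (huw₀ : G.Adj u w₀) :
    ∃ w, G.Adj u w ∧ G.distParity w ≠ G.distParity u := by
  obtain ⟨r, hr⟩ : ∃ r, (G.connectedComponentMk u).out = r := ⟨_, rfl⟩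
  have hparity : ∀ w, G.Reachable u w → G.distParity w = (G.dist r w).bodd := fun w huw => by
    rw [distParity, ← ConnectedComponent.eq.2 huw, hr]
  have hru : G.Reachable r u := ConnectedComponent.eq.1 (hr ▸ (G.connectedComponentMk u).out_eq)
  rw [hparity u .rfl]
  by_cases hr_eq : r = u
  · refine ⟨w₀, huw₀, ?_⟩
    rw [hparity w₀ huw₀.reachable, hr_eq, dist_self, dist_eq_one_iff_adj.2 huw₀]
    decide
  · obtain ⟨w, huw, hd⟩ := hru.exists_adj_dist_add_one_eq hr_eq
    refine ⟨w, huw, ?_⟩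
    rw [hparity w huw.reachable, ← hd, Nat.bodd_succ]
    simp

end SimpleGraph

lemma Relation.ReflTransGen.exists_hasDirWalk {R : V → V → Prop} {u w : V}
    (h : Relation.ReflTransGen R u w) : ∃ n, HasDirWalk R u w n := by
  induction h using Relation.ReflTransGen.head_induction_on with
  | refl => exact ⟨0, fun _ => w, rfl, rfl, fun i => i.elim0⟩
  | head hab _ ih =>
    obtain ⟨n, f, hf0, hfn, hf⟩ := ih
    refine ⟨n + 1, Fin.cons _ f, rfl, hfn, fun i => ?_⟩
    cases i using Fin.cases with
    | zero => simpa [hf0] using hab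
    | succ i => simpa [← Fin.succ_castSucc] using hf i

lemma isStrong_of_forall_dirTriangle {R : V → V → Prop} {v : V}
    (h : ∀ u, u ≠ v → ∃ w, (R v u ∧ R u w ∧ R w v) ∨ (R v w ∧ R w u ∧ R u v)) :
    IsStrong R := by
  have hhub : ∀ u, Relation.ReflTransGen R u v ∧ Relation.ReflTransGen R v u := fun u => by
    by_cases hu : u = v
    · subst hu; exact ⟨.refl, .refl⟩
    obtain ⟨w, ⟨hvu, huw, hwv⟩ | ⟨hvw, hwu, huv⟩⟩ := h u hu
    · exact ⟨.head huw (.single hwv), .single hvu⟩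
    · exact ⟨.single huv, .head hvw (.single hwu)⟩
  exact fun x y => ((hhub x).1.trans (hhub y).2).exists_hasDirWalk

section ApexOrientation

variable [LinearOrder V] (G : SimpleGraph V) (v : V) (c : V → Bool)

/-- Arcs run `v → false → true → v` between `v` and the two colour classes of `c`; all other
edges follow the lexicographic order on `(c a, a)`. -/
def apexOrientation (a b : V) : Prop :=
  G.Adj a b ∧
    if a = v then c b = false else if b = v then c a = true else toLex (c a, a) < toLex (c b, b)

lemma isOrientation_apexOrientation : IsOrientation G (apexOrientation G v c) := by
  refine ⟨fun _ _ h => h.1, fun a b hab => ?_, fun a b ⟨hab, h₁⟩ ⟨_, h₂⟩ => ?_⟩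
  · have hne : toLex (c a, a) ≠ toLex (c b, b) := fun h => hab.ne (Prod.ext_iff.1 h).2
    simp only [apexOrientation, hab, hab.symm, true_and]
    split_ifs <;> simp_all [lt_or_gt_of_ne hne]
  · have := hab.ne
    split_ifs at h₁ h₂ <;> simp_all [lt_asymm]

variable {G v c}

lemma apexOrientation_dirTriangle {u w : V} (hu : u ≠ v) (hw : w ≠ v) (hvu : G.Adj v u)
    (hvw : G.Adj v w) (huw : G.Adj u w) (hc : c w ≠ c u) :
    let R := apexOrientation G v c
    (R v u ∧ R u w ∧ R w v) ∨ (R v w ∧ R w u ∧ R u v) := by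
  cases hcu : c u <;> cases hcw : c w <;>
    simp_all [apexOrientation, huw.symm, hvu.symm, hvw.symm, Prod.Lex.toLex_lt_toLex]

end ApexOrientation

theorem exists_orientation_directed_triangles_general {V : Type*}
    (G : SimpleGraph V) (D : Set V) (v : V)
    (hstd : IsStandardPair G D) (hD : D = {v}) :
    ∃ R : V → V → Prop, IsOrientation G R ∧ IsStrong R ∧
      ∀ u, u ∉ D → ∃ w : V,
        (R v u ∧ R u w ∧ R w v) ∨ (R v w ∧ R w u ∧ R u v) := by
  obtain ⟨hbridgeless, -, hdom, -⟩ := hstd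
  subst hD
  let _ : LinearOrder V := IsWellOrder.linearOrder WellOrderingRel
  have hv_adj : ∀ u, u ≠ v → G.Adj v u := fun u hu => by
    obtain ⟨_, ⟨rfl, hadj⟩, -⟩ := hdom u hu
    exact hadj
  set c := (G.deleteIncidenceSet v).distParity
  set R := apexOrientation G v c
  have htriangle : ∀ u, u ≠ v → ∃ w, (R v u ∧ R u w ∧ R w v) ∨ (R v w ∧ R w u ∧ R u v) := by
    intro u hu
    obtain ⟨w₀, huw₀, hw₀⟩ := exists_adj_ne_of_not_isBridge hu (hbridgeless s(u, v))
    obtain ⟨w, huw, hc⟩ := exists_adj_distParity_ne (deleteIncidenceSet_adj.2 ⟨huw₀, hu, hw₀⟩)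
    obtain ⟨huw, -, hw⟩ := deleteIncidenceSet_adj.1 huw
    exact ⟨w, apexOrientation_dirTriangle hu hw (hv_adj u hu) (hv_adj w hw) huw hc⟩
  exact ⟨R, isOrientation_apexOrientation G v c, isStrong_of_forall_dirTriangle htriangle,
    htriangle⟩

/-- A standard pair with `D = {v}` admits a strong orientation in which
every dominated vertex lies on a directed triangle through `v`. -/
theorem exists_orientation_directed_triangles {V : Type*} [Fintype V]
    (G : SimpleGraph V) (D : Set V) (v : V)
    (hstd : IsStandardPair G D) (hD : D = {v}) :
    ∃ R : V → V → Prop, IsOrientation G R ∧ IsStrong R ∧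
      ∀ u, u ∉ D → ∃ w : V,
        (R v u ∧ R u w ∧ R w v) ∨ (R v w ∧ R w u ∧ R u v) :=
  exists_orientation_directed_triangles_general G D v hstd hD
end

section
/- Let G be a connected bridgeless graph with at least one edge, and let G' be the graph obtained from G by subdividing one edge (replacing an edge uv by a path u w v through a new vertex w). Then G' is connected and bridgeless, and the oriented diameter of G' is at least the oriented diameter of G. -/
open SimpleGraph

variable {V : Type*}

/-!
A strong orientation of the subdivision runs through the new vertex `none` as `u → none → v`
or as `v → none → u`. Contracting the arc entering `none` yields a strong orientation of `G`
under which every directed walk between old vertices only gets shorter, so the diameter does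
not grow. Conversely, a strong orientation of `G` extends to the subdivision by routing the arc
between `u` and `v` through `none`; this is needed because the oriented diameter of a graph
without strong orientations is `sInf ∅ = 0`.

Connectivity and bridgelessness of the subdivision follow by lifting walks of `G` (with the
edge to be avoided deleted) edge by edge.
-/

open Relation

section DirWalk

variable {W : Type*} {R : V → V → Prop} {S : W → W → Prop} {a b : V} {n : ℕ}

lemma hasDirWalk_zero_s10 : HasDirWalk R a b 0 ↔ a = b :=
  ⟨fun ⟨_, h0, hl, _⟩ => h0.symm.trans hl, fun h => ⟨fun _ => a, rfl, h, fun i => i.elim0⟩⟩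

lemma hasDirWalk_succ : HasDirWalk R a b (n + 1) ↔ ∃ c, R a c ∧ HasDirWalk R c b n := by
  constructor
  · rintro ⟨f, h0, hl, hf⟩
    refine ⟨f 1, h0 ▸ hf 0, fun i => f i.succ, rfl, hl, fun i => ?_⟩
    simpa only [Fin.succ_castSucc] using hf i.succ
  · rintro ⟨c, hac, f, h0, hl, hf⟩
    refine ⟨Fin.cons a f, rfl, by simpa [← Fin.succ_last] using hl, Fin.cases ?_ fun i => ?_⟩
    · simpa [h0] using hac
    · simpa [← Fin.succ_castSucc] using hf i

lemma exists_hasDirWalk_iff_reflTransGen : (∃ n, HasDirWalk R a b n) ↔ ReflTransGen R a b := by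
  constructor
  · rintro ⟨n, h⟩
    induction n generalizing a with
    | zero => exact (hasDirWalk_zero_s10.1 h) ▸ ReflTransGen.refl
    | succ n ih =>
      obtain ⟨c, hac, hcb⟩ := hasDirWalk_succ.1 h
      exact ReflTransGen.head hac (ih hcb)
  · intro h
    induction h using ReflTransGen.head_induction_on with
    | refl => exact ⟨0, hasDirWalk_zero_s10.2 rfl⟩
    | head hac _ ih =>
      obtain ⟨n, h⟩ := ih
      exact ⟨n + 1, hasDirWalk_succ.2 ⟨_, hac, h⟩⟩

lemma isStrong_iff : IsStrong R ↔ ∀ a b, ReflTransGen R a b :=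
  forall₂_congr fun _ _ => exists_hasDirWalk_iff_reflTransGen

lemma HasDirWalk.exists_le_map (g : V → W) (hg : ∀ a b, R a b → S (g a) (g b) ∨ g a = g b)
    (h : HasDirWalk R a b n) : ∃ m ≤ n, HasDirWalk S (g a) (g b) m := by
  induction n generalizing a with
  | zero => exact ⟨0, le_rfl, hasDirWalk_zero_s10.2 (congrArg g (hasDirWalk_zero_s10.1 h))⟩
  | succ n ih =>
    obtain ⟨c, hac, hcb⟩ := hasDirWalk_succ.1 h
    obtain ⟨m, hmn, hm⟩ := ih hcb
    rcases hg a c hac with hS | heq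
    · exact ⟨m + 1, by omega, hasDirWalk_succ.2 ⟨g c, hS, hm⟩⟩
    · exact ⟨m, by omega, heq ▸ hm⟩

lemma ddist_map_le (g : V → W) (hg : ∀ a b, R a b → S (g a) (g b) ∨ g a = g b)
    (h : ∃ n, HasDirWalk R a b n) : ddist S (g a) (g b) ≤ ddist R a b := by
  obtain ⟨m, hm, hwalk⟩ := HasDirWalk.exists_le_map g hg (Nat.sInf_mem h)
  exact (Nat.sInf_le hwalk).trans hm

lemma IsStrong.of_surjective (hR : IsStrong R) (g : V → W) (hsurj : g.Surjective)
    (hg : ∀ a b, R a b → S (g a) (g b) ∨ g a = g b) : IsStrong S := by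
  intro x y
  obtain ⟨⟨a, rfl⟩, ⟨b, rfl⟩⟩ := And.intro (hsurj x) (hsurj y)
  obtain ⟨n, h⟩ := hR a b
  obtain ⟨m, -, hm⟩ := h.exists_le_map g hg
  exact ⟨m, hm⟩

lemma diamOr_le_of_surjective [Fintype V] [Fintype W] (hR : IsStrong R) (g : V → W)
    (hsurj : g.Surjective) (hg : ∀ a b, R a b → S (g a) (g b) ∨ g a = g b) :
    diamOr S ≤ diamOr R := by
  refine Finset.sup_le fun p _ => ?_
  obtain ⟨⟨a, ha⟩, ⟨b, hb⟩⟩ := And.intro (hsurj p.1) (hsurj p.2)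
  calc theta S p.1 p.2 = theta S (g a) (g b) := by rw [ha, hb]
    _ ≤ theta R a b := max_le_max (ddist_map_le g hg (hR a b)) (ddist_map_le g hg (hR b a))
    _ ≤ diamOr R := Finset.le_sup (f := fun q : V × V => theta R q.1 q.2) (Finset.mem_univ (a, b))

end DirWalk

lemma orientedDiam_le_of_forall_exists {W : Type*} [Fintype V] [Fintype W]
    {G : SimpleGraph V} {H : SimpleGraph W}
    (hHG : ∀ S, IsOrientation H S → IsStrong S →
      ∃ R, IsOrientation G R ∧ IsStrong R ∧ diamOr R ≤ diamOr S)
    (hGH : ∀ R, IsOrientation G R → IsStrong R → ∃ S, IsOrientation H S ∧ IsStrong S) :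
    orientedDiam G ≤ orientedDiam H := by
  rcases Set.eq_empty_or_nonempty
    {d | ∃ S, IsOrientation H S ∧ IsStrong S ∧ diamOr S = d} with hempty | hne
  · have hGempty : {d | ∃ R, IsOrientation G R ∧ IsStrong R ∧ diamOr R = d} = ∅ := by
      refine Set.eq_empty_of_forall_notMem fun d ⟨R, hoR, hsR, _⟩ => ?_
      obtain ⟨S, hoS, hsS⟩ := hGH R hoR hsR
      exact hempty.subset ⟨S, hoS, hsS, rfl⟩
    simp only [orientedDiam, hGempty, Nat.sInf_empty, Nat.zero_le]
  · obtain ⟨S, hoS, hsS, hdS⟩ := Nat.sInf_mem hne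
    obtain ⟨R, hoR, hsR, hRS⟩ := hHG S hoS hsS
    have hR : diamOr R ∈ {d | ∃ R, IsOrientation G R ∧ IsStrong R ∧ diamOr R = d} :=
      ⟨R, hoR, hsR, rfl⟩
    exact (Nat.sInf_le hR).trans (hRS.trans_eq hdS)

section Subdivide

variable {G : SimpleGraph V} {u v x y : V}

@[simp]
lemma subdivide_adj_some_some :
    (subdivide G u v).Adj (some x) (some y) ↔
      G.Adj x y ∧ ¬(x = u ∧ y = v) ∧ ¬(x = v ∧ y = u) := by
  simp only [subdivide, fromRel_adj, ne_eq, Option.some.injEq]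
  constructor
  · rintro ⟨-, h | ⟨h, h₁, h₂⟩⟩
    exacts [h, ⟨h.symm, fun ⟨h₃, h₄⟩ => h₂ ⟨h₄, h₃⟩, fun ⟨h₃, h₄⟩ => h₁ ⟨h₄, h₃⟩⟩]
  · exact fun h => ⟨h.1.ne, Or.inl h⟩

@[simp]
lemma subdivide_adj_some_none : (subdivide G u v).Adj (some x) none ↔ x = u ∨ x = v := by
  simp [subdivide]

@[simp]
lemma subdivide_adj_none_some : (subdivide G u v).Adj none (some y) ↔ y = u ∨ y = v := by
  simp [subdivide]

lemma subdivide_comm : subdivide G u v = subdivide G v u := by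
  ext a b
  cases a <;> cases b <;>
    simp only [subdivide_adj_some_some, subdivide_adj_none_some, SimpleGraph.irrefl, adj_comm] <;>
    tauto

end Subdivide

lemma SimpleGraph.Reachable.map_of_forall_adj {W : Type*} {G : SimpleGraph V}
    {H : SimpleGraph W} (f : V → W) (hf : ∀ a b, G.Adj a b → H.Reachable (f a) (f b))
    {a b : V} (h : G.Reachable a b) : H.Reachable (f a) (f b) := by
  simp only [reachable_iff_reflTransGen] at hf h ⊢
  exact ReflTransGen.lift' f hf _ _ h

lemma isBridgeless_iff {G : SimpleGraph V} :
    IsBridgeless G ↔ ∀ x y, (G.deleteEdges {s(x, y)}).Reachable x y := by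
  simp [IsBridgeless, Sym2.forall, isBridge_iff]

-- `IsBridge s(x, y)` also holds when `x` and `y` are non-adjacent and lie in different components.
lemma IsBridgeless.preconnected {G : SimpleGraph V} (h : IsBridgeless G) : G.Preconnected :=
  fun x y => (isBridgeless_iff.1 h x y).mono (deleteEdges_le _)

section SubdivideConnectivity

variable {G : SimpleGraph V} {u v : V}

lemma subdivide_reachable_of_adj {a b : V} (h : G.Adj a b) :
    (subdivide G u v).Reachable (some a) (some b) := by
  by_cases hab : (a = u ∧ b = v) ∨ (a = v ∧ b = u)
  · have ha : (subdivide G u v).Adj (some a) none := subdivide_adj_some_none.2 (by tauto)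
    have hb : (subdivide G u v).Adj none (some b) := subdivide_adj_none_some.2 (by tauto)
    exact ha.reachable.trans hb.reachable
  · exact (subdivide_adj_some_some.2 ⟨h, by tauto, by tauto⟩).reachable

lemma subdivide_reachable {a b : V} (h : G.Reachable a b) :
    (subdivide G u v).Reachable (some a) (some b) :=
  h.map_of_forall_adj some fun _ _ => subdivide_reachable_of_adj

lemma subdivide_preconnected (h : G.Preconnected) :
    (subdivide G u v).Preconnected := by
  have hu : ∀ a, (subdivide G u v).Reachable (some u) a := by
    rintro (_ | x)
    · exact (subdivide_adj_some_none.2 (Or.inl rfl)).reachable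
    · exact subdivide_reachable (h u x)
  exact fun a b => (hu a).symm.trans (hu b)

lemma subdivide_deleteEdges_le (x y : V) :
    subdivide (G.deleteEdges {s(x, y)}) u v ≤
      (subdivide G u v).deleteEdges {s(some x, some y)} := by
  intro a b
  cases a <;> cases b <;> simp +contextual

lemma subdivide_reachable_deleteEdges_none (huv : u ≠ v) (hb : IsBridgeless G) :
    ((subdivide G u v).deleteEdges {s(some u, none)}).Reachable (some u) none := by
  have hv : ((subdivide G u v).deleteEdges {s(some u, none)}).Adj (some v) none := by
    simp [huv.symm]
  refine (Reachable.map_of_forall_adj some (fun a b hab => ?_) (isBridgeless_iff.1 hb u v)).trans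
    hv.reachable
  exact Adj.reachable (by simpa using hab)

lemma subdivide_isBridgeless (huv : u ≠ v) (hb : IsBridgeless G) :
    IsBridgeless (subdivide G u v) := by
  have hnone : ∀ {x}, x = u ∨ x = v →
      ((subdivide G u v).deleteEdges {s(some x, none)}).Reachable (some x) none := by
    rintro x (rfl | rfl)
    · exact subdivide_reachable_deleteEdges_none huv hb
    · rw [subdivide_comm]
      exact subdivide_reachable_deleteEdges_none huv.symm hb
  refine isBridgeless_iff.2 fun a b => ?_
  by_cases hab : (subdivide G u v).Adj a b
  swap
  · rw [deleteEdges_eq_self.2 (by simpa using hab)]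
    exact subdivide_preconnected hb.preconnected a b
  rcases a with _ | x <;> rcases b with _ | y
  · exact absurd hab (SimpleGraph.irrefl _)
  · rw [Sym2.eq_swap]
    exact (hnone (subdivide_adj_none_some.1 hab)).symm
  · exact hnone (subdivide_adj_some_none.1 hab)
  · exact (subdivide_reachable (isBridgeless_iff.1 hb x y)).mono (subdivide_deleteEdges_le x y)

end SubdivideConnectivity

section SubdivideOrientation

variable {G : SimpleGraph V} {u v : V}

lemma IsOrientation.subdivide_through_none {R' : Option V → Option V → Prop}
    (ho : IsOrientation (subdivide G u v) R') (hs : IsStrong R') :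
    (R' (some u) none ∧ R' none (some v)) ∨ (R' (some v) none ∧ R' none (some u)) := by
  rw [isStrong_iff] at hs
  obtain ⟨_ | b, hout, -⟩ := (hs none (some u)).cases_head.resolve_left (by simp)
  · exact absurd (ho.1 _ _ hout) (SimpleGraph.irrefl _)
  obtain ⟨_ | a, -, hin⟩ := (hs (some u) none).cases_tail.resolve_left (by simp)
  · exact absurd (ho.1 _ _ hin) (SimpleGraph.irrefl _)
  have hab : a ≠ b := by
    rintro rfl
    exact ho.2.2 _ _ hin hout
  rcases subdivide_adj_some_none.1 (ho.1 _ _ hin) with rfl | rfl <;>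
    rcases subdivide_adj_none_some.1 (ho.1 _ _ hout) with rfl | rfl
  exacts [absurd rfl hab, Or.inl ⟨hin, hout⟩, Or.inr ⟨hin, hout⟩, absurd rfl hab]

lemma exists_orientation_of_subdivide_through [Fintype V] {R' : Option V → Option V → Prop}
    (huv : G.Adj u v) (ho : IsOrientation (subdivide G u v) R') (hs : IsStrong R')
    (hu : R' (some u) none) (hv : R' none (some v)) :
    ∃ R, IsOrientation G R ∧ IsStrong R ∧ diamOr R ≤ diamOr R' := by
  set R : V → V → Prop := fun x y => R' (some x) (some y) ∨ (x = u ∧ y = v)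
  set g : Option V → V := fun a => a.getD u
  have hsurj : g.Surjective := fun x => ⟨some x, rfl⟩
  have hg : ∀ a b, R' a b → R (g a) (g b) ∨ g a = g b := by
    rintro (_ | x) (_ | y) hab
    · exact absurd (ho.1 _ _ hab) (SimpleGraph.irrefl _)
    · rcases subdivide_adj_none_some.1 (ho.1 _ _ hab) with rfl | rfl
      · exact absurd hu (ho.2.2 _ _ hab)
      · exact Or.inl (Or.inr ⟨rfl, rfl⟩)
    · rcases subdivide_adj_some_none.1 (ho.1 _ _ hab) with rfl | rfl
      · exact Or.inr rfl
      · exact absurd hv (ho.2.2 _ _ hab)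
    · exact Or.inl (Or.inl hab)
  refine ⟨R, ⟨?_, ?_, ?_⟩, hs.of_surjective g hsurj hg, diamOr_le_of_surjective hs g hsurj hg⟩
  · rintro x y (h | ⟨rfl, rfl⟩)
    exacts [(subdivide_adj_some_some.1 (ho.1 _ _ h)).1, huv]
  · intro x y hxy
    by_cases hxy' : (x = u ∧ y = v) ∨ (x = v ∧ y = u)
    · tauto
    · rcases ho.2.1 _ _ (subdivide_adj_some_some.2 ⟨hxy, by tauto, by tauto⟩) with h | h
      exacts [Or.inl (Or.inl h), Or.inr (Or.inl h)]
  · rintro x y (h | ⟨rfl, rfl⟩) (h' | h')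
    · exact ho.2.2 _ _ h h'
    · obtain ⟨rfl, rfl⟩ := h'
      simpa using ho.1 _ _ h
    · simpa using ho.1 _ _ h'
    · exact huv.ne h'.2

lemma exists_orientation_of_subdivide [Fintype V] {R' : Option V → Option V → Prop}
    (huv : G.Adj u v) (ho : IsOrientation (subdivide G u v) R') (hs : IsStrong R') :
    ∃ R, IsOrientation G R ∧ IsStrong R ∧ diamOr R ≤ diamOr R' := by
  rcases ho.subdivide_through_none hs with ⟨hu, hv⟩ | ⟨hv, hu⟩
  · exact exists_orientation_of_subdivide_through huv ho hs hu hv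
  · rw [subdivide_comm] at ho
    exact exists_orientation_of_subdivide_through huv.symm ho hs hv hu

end SubdivideOrientation

def subdivideRel (R : V → V → Prop) (u v : V) : Option V → Option V → Prop
  | some x, some y => R x y ∧ ¬(x = u ∧ y = v)
  | some x, none => x = u
  | none, some y => y = v
  | none, none => False

section SubdivideRel

variable {G : SimpleGraph V} {R : V → V → Prop} {u v : V}

lemma isOrientation_subdivideRel (huv : G.Adj u v) (ho : IsOrientation G R) (hR : R u v) :
    IsOrientation (subdivide G u v) (subdivideRel R u v) := by
  obtain ⟨harc, htotal, hantisymm⟩ := ho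
  have hvu : ¬R v u := hantisymm _ _ hR
  refine ⟨?_, ?_, ?_⟩
  · rintro (_ | x) (_ | y) h <;> simp only [subdivideRel] at h
    · simp [h]
    · simp [h]
    · exact subdivide_adj_some_some.2 ⟨harc _ _ h.1, h.2, fun ⟨hx, hy⟩ => hvu (hx ▸ hy ▸ h.1)⟩
  · rintro (_ | x) (_ | y) h
    · exact absurd h (SimpleGraph.irrefl _)
    · simpa [subdivideRel, or_comm, eq_comm] using subdivide_adj_none_some.1 h
    · simpa [subdivideRel, or_comm, eq_comm] using subdivide_adj_some_none.1 h
    · obtain ⟨hxy, h₁, h₂⟩ := subdivide_adj_some_some.1 h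
      rcases htotal _ _ hxy with h' | h'
      · exact Or.inl ⟨h', h₁⟩
      · exact Or.inr ⟨h', fun ⟨hy, hx⟩ => h₂ ⟨hx, hy⟩⟩
  · rintro (_ | x) (_ | y) h h' <;> simp only [subdivideRel] at h h'
    · exact huv.ne (h'.symm.trans h)
    · exact huv.ne (h.symm.trans h')
    · exact hantisymm _ _ h.1 h'.1

lemma isStrong_subdivideRel (hs : IsStrong R) (hR : R u v) :
    IsStrong (subdivideRel R u v) := by
  rw [isStrong_iff] at hs ⊢
  have hlift : ∀ x y, ReflTransGen R x y → ReflTransGen (subdivideRel R u v) (some x) (some y) :=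
    ReflTransGen.lift' some fun a b (hab : R a b) => show ReflTransGen _ (some a) (some b) by
      by_cases h : a = u ∧ b = v
      · obtain ⟨rfl, rfl⟩ := h
        exact ReflTransGen.head (b := none) rfl (ReflTransGen.single rfl)
      · exact ReflTransGen.single ⟨hab, h⟩
  have hto : ∀ a, ReflTransGen (subdivideRel R u v) a (some u) := by
    rintro (_ | x)
    · exact ReflTransGen.head (b := some v) rfl (hlift _ _ (hs v u))
    · exact hlift _ _ (hs x u)
  have hfrom : ∀ b, ReflTransGen (subdivideRel R u v) (some u) b := by
    rintro (_ | y)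
    · exact ReflTransGen.single rfl
    · exact hlift _ _ (hs u y)
  exact fun a b => (hto a).trans (hfrom b)

lemma exists_strong_orientation_subdivide (huv : G.Adj u v) (ho : IsOrientation G R)
    (hs : IsStrong R) :
    ∃ R', IsOrientation (subdivide G u v) R' ∧ IsStrong R' := by
  rcases ho.2.1 _ _ huv with hR | hR
  · exact ⟨_, isOrientation_subdivideRel huv ho hR, isStrong_subdivideRel hs hR⟩
  · rw [subdivide_comm]
    exact ⟨_, isOrientation_subdivideRel huv.symm ho hR, isStrong_subdivideRel hs hR⟩

end SubdivideRel

theorem subdivide_oriented_diam_ge_general {V : Type*} [Fintype V]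
    (G : SimpleGraph V) (u v : V) (huv : G.Adj u v)
    (hbridgeless : IsBridgeless G) :
    (subdivide G u v).Connected ∧ IsBridgeless (subdivide G u v) ∧
      orientedDiam G ≤ orientedDiam (subdivide G u v) := by
  have hb' := subdivide_isBridgeless huv.ne hbridgeless
  refine ⟨⟨hb'.preconnected⟩, hb', ?_⟩
  exact orientedDiam_le_of_forall_exists (fun _ => exists_orientation_of_subdivide huv)
    (fun _ => exists_strong_orientation_subdivide huv)

/-- Subdividing an edge of a connected bridgeless graph keeps it connected
and bridgeless and does not decrease the oriented diameter. -/
theorem subdivide_oriented_diam_ge {V : Type*} [Fintype V]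
    (G : SimpleGraph V) (u v : V) (huv : G.Adj u v)
    (hconn : G.Connected) (hbridgeless : IsBridgeless G) :
    (subdivide G u v).Connected ∧ IsBridgeless (subdivide G u v) ∧
      orientedDiam G ≤ orientedDiam (subdivide G u v) :=
  subdivide_oriented_diam_ge_general G u v huv hbridgeless
end
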